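/- arXiv:1512.09167 — 15 statements merged into one kernel-verified Lean document; each statement's English description precedes it below -/
import Mathlib

section
/- Let b, c be complex numbers with b ≠ 0 and c ≠ 0. For u, v, w ∈ ℂ define f₁ = c·v² − b²·u·w, g₁ = b·c·u² − v·w, h₁ = b·w² − c²·u·v, and then f₂ = c·g₁² − b²·f₁·h₁, g₂ = b·c·f₁² − g₁·h₁, h₂ = b·h₁² − c²·f₁·g₁. Then the three identities u·g₂ = v·f₂, u·h₂ = w·f₂, and v·h₂ = w·g₂ hold for all u, v, w ∈ ℂ if and only if b = 1. -/
/-- σ_{1,b,c} has order 2 (i.e. σ² fixes every projective point) iff b = 1. -/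
theorem sklyanin_sigma_sq_id_iff (b c : ℂ) (hb : b ≠ 0) (hc : c ≠ 0) :
    (∀ u v w : ℂ,
      u * (b * c * (c * v ^ 2 - b ^ 2 * u * w) ^ 2 -
            (b * c * u ^ 2 - v * w) * (b * w ^ 2 - c ^ 2 * u * v)) =
        v * (c * (b * c * u ^ 2 - v * w) ^ 2 -
            b ^ 2 * (c * v ^ 2 - b ^ 2 * u * w) * (b * w ^ 2 - c ^ 2 * u * v)) ∧
      u * (b * (b * w ^ 2 - c ^ 2 * u * v) ^ 2 -
            c ^ 2 * (c * v ^ 2 - b ^ 2 * u * w) * (b * c * u ^ 2 - v * w)) =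
        w * (c * (b * c * u ^ 2 - v * w) ^ 2 -
            b ^ 2 * (c * v ^ 2 - b ^ 2 * u * w) * (b * w ^ 2 - c ^ 2 * u * v)) ∧
      v * (b * (b * w ^ 2 - c ^ 2 * u * v) ^ 2 -
            c ^ 2 * (c * v ^ 2 - b ^ 2 * u * w) * (b * c * u ^ 2 - v * w)) =
        w * (b * c * (c * v ^ 2 - b ^ 2 * u * w) ^ 2 -
            (b * c * u ^ 2 - v * w) * (b * w ^ 2 - c ^ 2 * u * v))) ↔ b = 1 := by
  constructor
  · intro h
    have h1 := (h 1 1 0).1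
    have key : 2 * b * c ^ 3 * (1 - b) = 0 := by linear_combination h1
    have hne : (2 : ℂ) * b * c ^ 3 ≠ 0 :=
      mul_ne_zero (mul_ne_zero two_ne_zero hb) (pow_ne_zero 3 hc)
    have : (1 : ℂ) - b = 0 := (mul_eq_zero.mp key).resolve_left hne
    exact (sub_eq_zero.mp this).symm
  · rintro rfl u v w
    exact ⟨by ring, by ring, by ring⟩
end

section
/- Let b, c be complex numbers. For u, v, w ∈ ℂ define f₁ = c·v² − b²·u·w, g₁ = b·c·u² − v·w, h₁ = b·w² − c²·u·v. Then the three identities u·g₁ = v·f₁, u·h₁ = w·f₁, and v·h₁ = w·g₁ hold for all u, v, w ∈ ℂ if and only if b = −1 and c = 0. -/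
/-- σ_{1,b,c} is the identity on every projective point iff b = −1 and c = 0. -/
theorem sklyanin_sigma_id_iff (b c : ℂ) :
    (∀ u v w : ℂ,
      u * (b * c * u ^ 2 - v * w) = v * (c * v ^ 2 - b ^ 2 * u * w) ∧
      u * (b * w ^ 2 - c ^ 2 * u * v) = w * (c * v ^ 2 - b ^ 2 * u * w) ∧
      v * (b * w ^ 2 - c ^ 2 * u * v) = w * (b * c * u ^ 2 - v * w)) ↔
    b = -1 ∧ c = 0 := by
  constructor
  · intro h
    have h1 := (h 0 1 1).2.2
    have h2 := (h 1 1 0).1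
    have hb : b = -1 := by linear_combination h1
    have hc : c = 0 := by
      rw [hb] at h2; linear_combination -h2 / 2
    exact ⟨hb, hc⟩
  · rintro ⟨rfl, rfl⟩ u v w
    refine ⟨by ring, by ring, by ring⟩
end

section
/- Let c, x, y, z be complex numbers with c ≠ 0, c³ ≠ 1, and c³ ≠ −8. If 2·y·z + c·x² = 0, 2·z·x + c·y² = 0, and 2·x·y + c·z² = 0, then x = 0, y = 0, and z = 0. (Equivalently, the only 1-dimensional representation of the Sklyanin algebra S(1,1,c) is the trivial one.) -/
/-- The only 1-dimensional representation of the Sklyanin algebra S(1,1,c) is trivial. -/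
theorem sklyanin_one_dim_rep_trivial (c x y z : ℂ) (hc0 : c ≠ 0) (hc1 : c ^ 3 ≠ 1)
    (hc8 : c ^ 3 ≠ -8)
    (h1 : 2 * y * z + c * x ^ 2 = 0) (h2 : 2 * z * x + c * y ^ 2 = 0)
    (h3 : 2 * x * y + c * z ^ 2 = 0) :
    x = 0 ∧ y = 0 ∧ z = 0 := by
  have key : (c ^ 3 + 8) * (x * y * z) ^ 2 = 0 := by
    linear_combination (4 * x ^ 2 * y * z) * h1 - (2 * c * x ^ 3 * y) * h2 +
      (c ^ 2 * x ^ 2 * y ^ 2) * h3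
  have hc : c ^ 3 + 8 ≠ 0 := fun h => hc8 (by linear_combination h)
  have hxyz : x * y * z = 0 := by
    have := mul_eq_zero.mp key
    rcases this with h | h
    · exact absurd h hc
    · exact pow_eq_zero_iff (n := 2) (by norm_num) |>.mp h
  -- helper: if x = 0 then y = 0 and z = 0
  have sq0 : ∀ w : ℂ, c * w ^ 2 = 0 → w = 0 := fun w hw => by
    rcases mul_eq_zero.mp hw with h | h
    · exact absurd h hc0
    · exact pow_eq_zero_iff (n := 2) (by norm_num) |>.mp h
  rcases mul_eq_zero.mp hxyz with hxy | hz
  · rcases mul_eq_zero.mp hxy with hx | hy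
    · have hy : y = 0 := sq0 y (by linear_combination h2 - 2 * z * hx)
      have hz : z = 0 := sq0 z (by linear_combination h3 - 2 * y * hx)
      exact ⟨hx, hy, hz⟩
    · have hx : x = 0 := sq0 x (by linear_combination h1 - 2 * z * hy)
      have hz : z = 0 := sq0 z (by linear_combination h3 - 2 * x * hy)
      exact ⟨hx, hy, hz⟩
  · have hx : x = 0 := sq0 x (by linear_combination h1 - 2 * y * hz)
    have hy : y = 0 := sq0 y (by linear_combination h2 - 2 * x * hz)
    exact ⟨hx, hy, hz⟩
end

section
/- Let c ∈ ℂ with c ≠ 0, c³ ≠ 1, and c³ ≠ −8, and let S(1,1,c) be the 3-dimensional Sklyanin algebra at parameter c. Then every simple left S(1,1,c)-module M is finite-dimensional as a ℂ-vector space, of dimension at most 2. -/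
/-- The defining relations of the 3-dimensional Sklyanin algebra S(1,1,c),
on generators x = ι 0, y = ι 1, z = ι 2 of the free algebra:
yz + zy + cx², zx + xz + cy², xy + yx + cz². -/
inductive SklyaninRel (c : ℂ) : FreeAlgebra ℂ (Fin 3) → FreeAlgebra ℂ (Fin 3) → Prop
  | r1 : SklyaninRel c
      (FreeAlgebra.ι ℂ (1 : Fin 3) * FreeAlgebra.ι ℂ (2 : Fin 3) +
       FreeAlgebra.ι ℂ (2 : Fin 3) * FreeAlgebra.ι ℂ (1 : Fin 3) +
       c • (FreeAlgebra.ι ℂ (0 : Fin 3) * FreeAlgebra.ι ℂ (0 : Fin 3))) 0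
  | r2 : SklyaninRel c
      (FreeAlgebra.ι ℂ (2 : Fin 3) * FreeAlgebra.ι ℂ (0 : Fin 3) +
       FreeAlgebra.ι ℂ (0 : Fin 3) * FreeAlgebra.ι ℂ (2 : Fin 3) +
       c • (FreeAlgebra.ι ℂ (1 : Fin 3) * FreeAlgebra.ι ℂ (1 : Fin 3))) 0
  | r3 : SklyaninRel c
      (FreeAlgebra.ι ℂ (0 : Fin 3) * FreeAlgebra.ι ℂ (1 : Fin 3) +
       FreeAlgebra.ι ℂ (1 : Fin 3) * FreeAlgebra.ι ℂ (0 : Fin 3) +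
       c • (FreeAlgebra.ι ℂ (2 : Fin 3) * FreeAlgebra.ι ℂ (2 : Fin 3))) 0

/-- The 3-dimensional Sklyanin algebra S(1,1,c). -/
abbrev Sklyanin (c : ℂ) := RingQuot (SklyaninRel c)

/-!
The relations force the squares `x²`, `y²`, `z²` to be central: going once around the
cyclic symmetry of the relations gives `[x², y] = c [z², x] = c² [y², z] = c³ [x², y]`,
and `c³ ≠ 1`. The algebra has countable dimension over the uncountable field `ℂ`, so by
Dixmier's form of Schur's lemma central elements act on a simple module by scalars. In the
image of the algebra in `End_ℂ M` the generators then square to scalars and anticommute up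
to scalars, so this image is spanned by the eight ordered monomials `1, x, y, z, xy, xz, yz,
xyz`. Hence `M` is finite-dimensional, and by Burnside's theorem the image is all of
`End_ℂ M`, so `(dim M)² ≤ 8`.
-/

open Cardinal Module Submodule
open scoped Pointwise

universe u

section SpanOnePair

variable {K A : Type*} [Field K] [Ring A] [Algebra K A] {x y z : A}

theorem span_one_pair_mul_self_le (hx : x * x ∈ (⊥ : Subalgebra K A)) :
    span K {1, x} * span K {1, x} ≤ span K {1, x} := by
  obtain ⟨a, ha⟩ := Algebra.mem_bot.mp hx
  rw [span_mul_span, span_le]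
  rintro _ ⟨u, hu, v, hv, rfl⟩
  rcases hu with rfl | rfl <;> rcases hv with rfl | rfl
  · simpa using subset_span (by simp)
  · simpa using subset_span (by simp)
  · simpa using subset_span (by simp)
  · show v * v ∈ span K {1, v}
    rw [← ha, Algebra.algebraMap_eq_smul_one]
    exact smul_mem _ _ (subset_span (by simp))

theorem span_one_pair_mul_le_mul_comm (hyx : y * x ∈ span K {1, x * y}) :
    span K {1, y} * span K {1, x} ≤ span K {1, x} * span K {1, y} := by
  rw [span_mul_span, span_mul_span, span_le]
  have hsub : ({1, x * y} : Set A) ⊆ ({1, x} : Set A) * ({1, y} : Set A) := by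
    rintro _ (rfl | rfl)
    · exact ⟨1, by simp, 1, by simp, one_mul 1⟩
    · exact ⟨x, by simp, y, by simp, rfl⟩
  rintro _ ⟨u, hu, v, hv, rfl⟩
  rcases hu with rfl | rfl <;> rcases hv with rfl | rfl
  · exact subset_span ⟨1, by simp, 1, by simp, rfl⟩
  · exact subset_span ⟨v, by simp, 1, by simp, by simp⟩
  · exact subset_span ⟨1, by simp, u, by simp, by simp⟩
  · exact span_mono hsub hyx

theorem finrank_span_one_pair_mul_le (x y z : A) :
    finrank K (span K {1, x} * span K {1, y} * span K {1, z} : Submodule K A) ≤ 8 := by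
  classical
  rw [span_mul_span, span_mul_span]
  have hfin : ({1, x} * {1, y} * {1, z} : Set A) = ↑({1, x} * {1, y} * {1, z} : Finset A) := by
    push_cast; rfl
  rw [hfin]
  calc finrank K (span K ((({1, x} : Finset A) * {1, y} * {1, z} : Finset A) : Set A))
      ≤ ({1, x} * {1, y} * {1, z} : Finset A).card := finrank_span_finset_le_card _
    _ ≤ ({1, x} : Finset A).card * ({1, y} : Finset A).card * ({1, z} : Finset A).card :=
        Finset.card_mul_le.trans (Nat.mul_le_mul_right _ Finset.card_mul_le)
    _ ≤ 2 * 2 * 2 := by gcongr <;> exact Finset.card_le_two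

theorem toSubmodule_adjoin_le_span_one_pair_mul
    (hx : x * x ∈ (⊥ : Subalgebra K A)) (hy : y * y ∈ (⊥ : Subalgebra K A))
    (hz : z * z ∈ (⊥ : Subalgebra K A)) (hyx : y * x ∈ span K {1, x * y})
    (hzx : z * x ∈ span K {1, x * z}) (hzy : z * y ∈ span K {1, y * z}) :
    Subalgebra.toSubmodule (Algebra.adjoin K {x, y, z}) ≤
      span K {1, x} * span K {1, y} * span K {1, z} := by
  set P := span K {1, x}
  set Q := span K {1, y}
  set R := span K {1, z}
  have hP : 1 ≤ P := one_le.mpr (subset_span (by simp))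
  have hQ : 1 ≤ Q := one_le.mpr (subset_span (by simp))
  have hR : 1 ≤ R := one_le.mpr (subset_span (by simp))
  have hone : (1 : A) ∈ P * Q * R := one_le.mp (one_le_mul (one_le_mul hP hQ) hR)
  have hPW : P * (P * Q * R) ≤ P * Q * R :=
    calc P * (P * Q * R) = P * P * Q * R := by simp only [mul_assoc]
      _ ≤ P * Q * R := by gcongr; exact span_one_pair_mul_self_le hx
  have hQW : Q * (P * Q * R) ≤ P * Q * R :=
    calc Q * (P * Q * R) = Q * P * (Q * R) := by simp only [mul_assoc]
      _ ≤ P * Q * (Q * R) := by gcongr ?_ * _; exact span_one_pair_mul_le_mul_comm hyx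
      _ = P * (Q * Q) * R := by simp only [mul_assoc]
      _ ≤ P * Q * R := by gcongr; exact span_one_pair_mul_self_le hy
  have hRW : R * (P * Q * R) ≤ P * Q * R :=
    calc R * (P * Q * R) = R * P * (Q * R) := by simp only [mul_assoc]
      _ ≤ P * R * (Q * R) := by gcongr ?_ * _; exact span_one_pair_mul_le_mul_comm hzx
      _ = P * (R * Q) * R := by simp only [mul_assoc]
      _ ≤ P * (Q * R) * R := by gcongr P * ?_ * _; exact span_one_pair_mul_le_mul_comm hzy
      _ = P * Q * (R * R) := by simp only [mul_assoc]
      _ ≤ P * Q * R := by gcongr; exact span_one_pair_mul_self_le hz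
  have hmul : P * Q * R * (P * Q * R) ≤ P * Q * R :=
    calc P * Q * R * (P * Q * R) = P * (Q * (R * (P * Q * R))) := by simp only [mul_assoc]
      _ ≤ P * Q * R := (mul_le_mul_right (mul_le_mul_right hRW Q |>.trans hQW) P).trans hPW
  have hxW : x ∈ P * Q * R := by
    simpa using mul_mem_mul (mul_mem_mul (subset_span (by simp) : x ∈ P) (one_le.mp hQ))
      (one_le.mp hR)
  have hyW : y ∈ P * Q * R := by
    simpa using mul_mem_mul (mul_mem_mul (one_le.mp hP) (subset_span (by simp) : y ∈ Q))
      (one_le.mp hR)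
  have hzW : z ∈ P * Q * R := by
    simpa using mul_mem_mul (one_le.mp (one_le_mul hP hQ)) (subset_span (by simp) : z ∈ R)
  exact Algebra.adjoin_le
    (S := (P * Q * R).toSubalgebra hone fun _ _ ha hb ↦ hmul (mul_mem_mul ha hb))
    (Set.insert_subset_iff.mpr ⟨hxW, Set.pair_subset_iff.mpr ⟨hyW, hzW⟩⟩)

theorem finite_span_one_pair_mul (x y z : A) :
    Module.Finite K (span K {1, x} * span K {1, y} * span K {1, z} : Submodule K A) := by
  rw [span_mul_span, span_mul_span]
  exact Module.Finite.span_of_finite K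
    (((Set.toFinite _).mul (Set.toFinite _)).mul (Set.toFinite _))

end SpanOnePair

section SklyaninTriple

variable {K A : Type*} [Field K] [Ring A] [Algebra K A] {c : K} {x y z : A}

structure IsSklyaninTriple (c : K) (x y z : A) : Prop where
  rel_yz : y * z + z * y + c • (x * x) = 0
  rel_zx : z * x + x * z + c • (y * y) = 0
  rel_xy : x * y + y * x + c • (z * z) = 0

namespace IsSklyaninTriple

theorem rotate (h : IsSklyaninTriple c x y z) : IsSklyaninTriple c y z x :=
  ⟨h.rel_zx, h.rel_xy, h.rel_yz⟩

theorem swap (h : IsSklyaninTriple c x y z) : IsSklyaninTriple c x z y :=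
  ⟨by rw [add_comm (z * y), h.rel_yz], by rw [add_comm (y * x), h.rel_xy],
    by rw [add_comm (x * z), h.rel_zx]⟩

theorem map {B : Type*} [Ring B] [Algebra K B] (h : IsSklyaninTriple c x y z) (f : A →ₐ[K] B) :
    IsSklyaninTriple c (f x) (f y) (f z) := by
  constructor <;> simp only [← map_mul, ← map_smul, ← map_add] <;>
    simp only [h.rel_yz, h.rel_zx, h.rel_xy, map_zero]

theorem mul_self_mul_sub (h : IsSklyaninTriple c x y z) :
    x * x * y - y * (x * x) = c • (z * z * x - x * (z * z)) := by
  have key : x * (x * y + y * x + c • (z * z)) - (x * y + y * x + c • (z * z)) * x =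
      x * x * y - y * (x * x) - c • (z * z * x - x * (z * z)) := by
    simp only [mul_add, add_mul, mul_smul_comm, smul_mul_assoc, smul_sub, mul_assoc]
    abel
  rw [h.rel_xy, mul_zero, zero_mul, sub_zero, eq_comm, sub_eq_zero] at key
  exact key

theorem commute_mul_self (hc : c ^ 3 ≠ 1) (h : IsSklyaninTriple c x y z) :
    Commute (x * x) y := by
  have hcycle : x * x * y - y * (x * x) = c ^ 3 • (x * x * y - y * (x * x)) :=
    calc x * x * y - y * (x * x)
        = c • c • (y * y * z - z * (y * y)) := by
          rw [h.mul_self_mul_sub, h.rotate.rotate.mul_self_mul_sub]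
      _ = c ^ 3 • (x * x * y - y * (x * x)) := by
          rw [h.rotate.mul_self_mul_sub, smul_smul, smul_smul, pow_three, mul_assoc]
  have hzero : (1 - c ^ 3) • (x * x * y - y * (x * x)) = 0 := by
    rw [sub_smul, one_smul, ← hcycle, sub_self]
  exact sub_eq_zero.mp ((smul_eq_zero.mp hzero).resolve_left (sub_ne_zero.mpr hc.symm))

theorem mul_self_mem_center (hc : c ^ 3 ≠ 1) (h : IsSklyaninTriple c x y z)
    (hgen : Algebra.adjoin K {x, y, z} = ⊤) : x * x ∈ Subalgebra.center K A := by
  suffices Algebra.adjoin K {x, y, z} ≤ Subalgebra.centralizer K {x * x} by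
    rw [hgen, top_le_iff, Subalgebra.centralizer_eq_top_iff_subset] at this
    exact this rfl
  rw [Algebra.adjoin_le_iff]
  rintro w (rfl | rfl | rfl) _ rfl
  · exact mul_assoc w w w
  · exact (h.commute_mul_self hc).eq
  · exact (h.swap.commute_mul_self hc).eq

theorem mul_comm_mem_span (h : IsSklyaninTriple c x y z) (hz : z * z ∈ (⊥ : Subalgebra K A)) :
    y * x ∈ span K {1, x * y} := by
  obtain ⟨a, ha⟩ := hz
  have hzz : z * z = a • 1 := by rw [← ha]; exact Algebra.algebraMap_eq_smul_one a
  have hyx : y * x = -(x * y) - (c * a) • 1 :=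
    calc y * x = (x * y + y * x + c • (z * z)) - x * y - c • (z * z) := by abel
      _ = -(x * y) - (c * a) • 1 := by rw [h.rel_xy, hzz, smul_smul]; abel
  rw [hyx]
  exact sub_mem (neg_mem (subset_span (by simp))) (smul_mem _ _ (subset_span (by simp)))

theorem toSubmodule_adjoin_le (h : IsSklyaninTriple c x y z)
    (hx : x * x ∈ (⊥ : Subalgebra K A)) (hy : y * y ∈ (⊥ : Subalgebra K A))
    (hz : z * z ∈ (⊥ : Subalgebra K A)) :
    Subalgebra.toSubmodule (Algebra.adjoin K {x, y, z}) ≤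
      span K {1, x} * span K {1, y} * span K {1, z} :=
  toSubmodule_adjoin_le_span_one_pair_mul hx hy hz (h.mul_comm_mem_span hz)
    (h.swap.mul_comm_mem_span hy) (h.rotate.mul_comm_mem_span hx)

end IsSklyaninTriple

end SklyaninTriple

-- The centre of `D` is a field; if `d` were transcendental in it, the elements `(d - a)⁻¹`,
-- `a : K`, would be linearly independent.
theorem Subalgebra.mem_bot_of_mem_center {K D : Type u} [Field K] [IsAlgClosed K]
    [DivisionRing D] [Algebra K D] (hD : Module.rank K D < #K) {d : D}
    (hd : d ∈ Subalgebra.center K D) : d ∈ (⊥ : Subalgebra K D) := by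
  let _ : Field (Subalgebra.center K D) := inferInstanceAs (Field (Subring.center D))
  have halg : IsAlgebraic K (⟨d, hd⟩ : Subalgebra.center K D) := by
    by_contra htr
    have hli := (Transcendental.linearIndependent_sub_inv htr).cardinal_le_rank
    exact (hli.trans (Submodule.rank_le (Subalgebra.toSubmodule (Subalgebra.center K D)))).not_gt hD
  have hdeg := IsAlgClosed.degree_eq_one_of_irreducible K (minpoly.irreducible halg.isIntegral)
  obtain ⟨a, ha⟩ := minpoly.mem_range_of_degree_eq_one K _ hdeg
  exact ⟨a, congrArg Subtype.val ha⟩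

section SimpleModule

variable {K S M : Type u} [Field K] [Ring S] [Algebra K S] [AddCommGroup M] [Module K M]
  [Module S M] [IsScalarTower K S M] [IsSimpleModule S M]

variable (K) in
theorem IsSimpleModule.rank_le_rank : Module.rank K M ≤ Module.rank K S := by
  have := IsSimpleModule.nontrivial S M
  obtain ⟨m, hm⟩ := exists_ne (0 : M)
  exact LinearMap.rank_le_of_surjective ((LinearMap.toSpanSingleton S M m).restrictScalars K)
    (IsSimpleModule.toSpanSingleton_surjective S hm)

variable (K) in
theorem IsSimpleModule.rank_end_le : Module.rank K (Module.End S M) ≤ Module.rank K M := by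
  have := IsSimpleModule.nontrivial S M
  obtain ⟨m, hm⟩ := exists_ne (0 : M)
  let eval : Module.End S M →ₗ[K] M :=
    { toFun := fun ψ ↦ ψ m, map_add' := fun _ _ ↦ rfl, map_smul' := fun _ _ ↦ rfl }
  refine LinearMap.rank_le_of_injective eval fun ψ χ h ↦ ?_
  exact LinearMap.ext_on (IsSimpleModule.span_singleton_eq_top S hm) (Set.eqOn_singleton.mpr h)

theorem IsSimpleModule.lsmul_mem_bot_of_mem_center [IsAlgClosed K]
    (hS : Module.rank K S < #K) {w : S} (hw : w ∈ Subalgebra.center K S) :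
    Algebra.lsmul K K M w ∈ (⊥ : Subalgebra K (Module.End K M)) := by
  classical
  let φ : Module.End S M :=
    { toFun := (w • ·)
      map_add' := smul_add w
      map_smul' := fun s m ↦ by
        rw [RingHom.id_apply, smul_smul, smul_smul, Subalgebra.mem_center_iff.mp hw s] }
  have hφ : φ ∈ Subalgebra.center K (Module.End S M) :=
    Subalgebra.mem_center_iff.mpr fun ψ ↦ LinearMap.ext fun m ↦ ψ.map_smul w m
  obtain ⟨a, ha⟩ := Subalgebra.mem_bot_of_mem_center
    (((rank_end_le K).trans (rank_le_rank K)).trans_lt hS) hφ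
  exact ⟨a, LinearMap.ext fun m ↦ (algebraMap_end_apply K K M a m).symm.trans congr($ha m)⟩

theorem IsSimpleModule.lsmul_surjective [IsAlgClosed K] [FiniteDimensional K M] :
    Function.Surjective (Algebra.lsmul K K M : S →ₐ[K] Module.End K M) := by
  intro f
  -- Schur's lemma makes `f` linear over `End_S M = K`, so Jacobson density applies to it.
  have hscalar := (IsSimpleModule.algebraMap_end_bijective_of_isAlgClosed (A := S) (V := M) K).2
  let f' : Module.End (Module.End S M) M :=
    { toFun := f
      map_add' := f.map_add
      map_smul' := fun ψ m ↦ by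
        obtain ⟨a, rfl⟩ := hscalar ψ
        simp }
  let b := Module.finBasis K M
  classical
  obtain ⟨s, hs⟩ := jacobson_density f' (Finset.univ.image b)
  exact ⟨s, b.ext fun i ↦ (hs _ (Finset.mem_image_of_mem _ (Finset.mem_univ i))).symm⟩

theorem IsSimpleModule.finite_of_finite_range_lsmul
    [Module.Finite K (Algebra.lsmul K K M : S →ₐ[K] Module.End K M).range] :
    Module.Finite K M := by
  have := IsSimpleModule.nontrivial S M
  obtain ⟨m, hm⟩ := exists_ne (0 : M)
  refine Module.Finite.of_surjective
    (LinearMap.applyₗ m ∘ₗ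
      (Algebra.lsmul K K M : S →ₐ[K] Module.End K M).range.val.toLinearMap)
    fun n ↦ ?_
  obtain ⟨s, rfl⟩ := IsSimpleModule.toSpanSingleton_surjective S hm n
  exact ⟨⟨_, s, rfl⟩, rfl⟩

theorem IsSimpleModule.finrank_range_lsmul [IsAlgClosed K] [FiniteDimensional K M] :
    finrank K (Algebra.lsmul K K M : S →ₐ[K] Module.End K M).range =
      finrank K M * finrank K M := by
  rw [(AlgHom.range_eq_top _).mpr lsmul_surjective,
    Subalgebra.topEquiv.toLinearEquiv.finrank_eq, finrank_linearMap]

end SimpleModule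

namespace Sklyanin

variable (c : ℂ)

noncomputable def gen (i : Fin 3) : Sklyanin c :=
  RingQuot.mkAlgHom ℂ (SklyaninRel c) (FreeAlgebra.ι ℂ i)

theorem isSklyaninTriple : IsSklyaninTriple c (gen c 0) (gen c 1) (gen c 2) := by
  refine ⟨?_, ?_, ?_⟩
  · simpa [gen] using RingQuot.mkAlgHom_rel ℂ (SklyaninRel.r1 (c := c))
  · simpa [gen] using RingQuot.mkAlgHom_rel ℂ (SklyaninRel.r2 (c := c))
  · simpa [gen] using RingQuot.mkAlgHom_rel ℂ (SklyaninRel.r3 (c := c))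

theorem adjoin_gen : Algebra.adjoin ℂ {gen c 0, gen c 1, gen c 2} = ⊤ := by
  have hrange : {gen c 0, gen c 1, gen c 2} =
      RingQuot.mkAlgHom ℂ (SklyaninRel c) '' Set.range (FreeAlgebra.ι ℂ) := by
    rw [← Set.range_comp]
    ext; simp [gen, Fin.exists_fin_succ, eq_comm]
  rw [hrange, Algebra.adjoin_image, FreeAlgebra.adjoin_range_ι, Algebra.map_top,
    AlgHom.range_eq_top]
  exact RingQuot.mkAlgHom_surjective ℂ _

theorem rank_le_aleph0 : Module.rank ℂ (Sklyanin c) ≤ ℵ₀ := by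
  refine (LinearMap.rank_le_of_surjective (RingQuot.mkAlgHom ℂ (SklyaninRel c)).toLinearMap
    (RingQuot.mkAlgHom_surjective ℂ _)).trans ?_
  rw [FreeAlgebra.rank_eq]
  simp

end Sklyanin

theorem sklyanin_simple_module_finrank_le_two_general
    (c : ℂ) (hc1 : c ^ 3 ≠ 1)
    (M : Type) [AddCommGroup M] [Module ℂ M] [Module (Sklyanin c) M]
    [IsScalarTower ℂ (Sklyanin c) M] [IsSimpleModule (Sklyanin c) M] :
    Module.Finite ℂ M ∧ Module.finrank ℂ M ≤ 2 := by
  let Φ : Sklyanin c →ₐ[ℂ] Module.End ℂ M := Algebra.lsmul ℂ ℂ M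
  have hS : Module.rank ℂ (Sklyanin c) < #ℂ :=
    (Sklyanin.rank_le_aleph0 c).trans_lt (mk_complex ▸ aleph0_lt_continuum)
  have hsq {u v w : Sklyanin c} (h : IsSklyaninTriple c u v w)
      (hgen : Algebra.adjoin ℂ {u, v, w} = ⊤) :
      Φ u * Φ u ∈ (⊥ : Subalgebra ℂ (Module.End ℂ M)) :=
    map_mul Φ u u ▸
      IsSimpleModule.lsmul_mem_bot_of_mem_center hS (h.mul_self_mem_center hc1 hgen)
  have h := Sklyanin.isSklyaninTriple c
  have hgen := Sklyanin.adjoin_gen c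
  have hrange : Subalgebra.toSubmodule Φ.range ≤ span ℂ {1, Φ (Sklyanin.gen c 0)} *
      span ℂ {1, Φ (Sklyanin.gen c 1)} * span ℂ {1, Φ (Sklyanin.gen c 2)} := by
    rw [← Algebra.map_top, ← hgen, ← Algebra.adjoin_image, Set.image_insert_eq,
      Set.image_pair]
    exact (h.map Φ).toSubmodule_adjoin_le (hsq h hgen)
      (hsq h.rotate (by rwa [Set.pair_comm, Set.insert_comm]))
      (hsq h.rotate.rotate (by rwa [Set.insert_comm, Set.pair_comm]))
  have hWfin := finite_span_one_pair_mul (K := ℂ) (Φ (Sklyanin.gen c 0)) (Φ (Sklyanin.gen c 1))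
    (Φ (Sklyanin.gen c 2))
  have hrangeFin : Module.Finite ℂ Φ.range := Submodule.finiteDimensional_of_le hrange
  have hMfin : Module.Finite ℂ M := IsSimpleModule.finite_of_finite_range_lsmul (S := Sklyanin c)
  have hdim : finrank ℂ M * finrank ℂ M ≤ 8 := by
    rw [← IsSimpleModule.finrank_range_lsmul (S := Sklyanin c)]
    exact (Submodule.finrank_mono hrange).trans (finrank_span_one_pair_mul_le _ _ _)
  exact ⟨hMfin, by nlinarith⟩

/-- Every simple left S(1,1,c)-module is finite-dimensional over ℂ, of
dimension at most 2. -/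
theorem sklyanin_simple_module_finrank_le_two
    (c : ℂ) (hc0 : c ≠ 0) (hc1 : c ^ 3 ≠ 1) (hc8 : c ^ 3 ≠ -8)
    (M : Type) [AddCommGroup M] [Module ℂ M] [Module (Sklyanin c) M]
    [IsScalarTower ℂ (Sklyanin c) M] [IsSimpleModule (Sklyanin c) M] :
    Module.Finite ℂ M ∧ Module.finrank ℂ M ≤ 2 :=
  sklyanin_simple_module_finrank_le_two_general c hc1 M
end

section
/- Let c, z₄ ∈ ℂ with c ≠ 0, c³ ≠ 1, c³ ≠ −8, and z₄ ≠ 0. Set X = [[0, 1], [0, 0]], Y = [[−1, 1/(c·z₄²)], [−c·z₄², 1]], and Z = [[−z₄, 2/(c·z₄)], [0, z₄]] in Mat₂(ℂ). Then (X, Y, Z) is a matrix solution for S(1,1,c), i.e. Y·Z + Z·Y + c·X² = 0, Z·X + X·Z + c·Y² = 0, and X·Y + Y·X + c·Z² = 0, and it is irreducible, i.e. the ℂ-subalgebra of Mat₂(ℂ) generated by X, Y, Z is all of Mat₂(ℂ). -/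
/-- The second representative family of Table 3 (one-Jordan-block case) is an
irreducible matrix solution of S(1,1,c). -/
theorem table3_family2_irreducible_solution
    (c z₄ : ℂ) (hc0 : c ≠ 0) (hc1 : c ^ 3 ≠ 1) (hc8 : c ^ 3 ≠ -8) (hz : z₄ ≠ 0) :
    let X : Matrix (Fin 2) (Fin 2) ℂ := !![0, 1; 0, 0]
    let Y : Matrix (Fin 2) (Fin 2) ℂ := !![-1, 1 / (c * z₄ ^ 2); -(c * z₄ ^ 2), 1]
    let Z : Matrix (Fin 2) (Fin 2) ℂ := !![-z₄, 2 / (c * z₄); 0, z₄]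
    (Y * Z + Z * Y + c • (X * X) = 0 ∧
     Z * X + X * Z + c • (Y * Y) = 0 ∧
     X * Y + Y * X + c • (Z * Z) = 0) ∧
    Algebra.adjoin ℂ {X, Y, Z} = ⊤ := by
  intro X Y Z
  have hcz : c * z₄ ^ 2 ≠ 0 := by
    intro h
    rcases mul_eq_zero.mp h with h | h
    · exact hc0 h
    · exact hz (pow_eq_zero_iff (by norm_num) |>.mp h)
  constructor
  · refine ⟨?_, ?_, ?_⟩ <;>
    · show _ = (0 : Matrix (Fin 2) (Fin 2) ℂ)
      ext i j
      fin_cases i <;> fin_cases j <;>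
        simp [X, Y, Z, Matrix.mul_apply, Fin.sum_univ_two] <;>
        (try field_simp) <;> first | ring1 | exact Or.inr (by ring)
  · set S := Algebra.adjoin ℂ ({X, Y, Z} : Set (Matrix (Fin 2) (Fin 2) ℂ)) with hS
    have hX : X ∈ S := Algebra.subset_adjoin (by simp)
    have hY : Y ∈ S := Algebra.subset_adjoin (by simp)
    have h00 : (!![1, 0; 0, 0] : Matrix (Fin 2) (Fin 2) ℂ) ∈ S := by
      have h1 : X * Y - X ∈ S := S.sub_mem (S.mul_mem hX hY) hX
      have h2 : (-(c * z₄ ^ 2))⁻¹ • (X * Y - X) ∈ S := S.smul_mem h1 _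
      convert h2 using 1
      ext i j
      fin_cases i <;> fin_cases j <;>
        simp [X, Y, Matrix.mul_apply, Fin.sum_univ_two] <;> field_simp
    have h11 : (!![0, 0; 0, 1] : Matrix (Fin 2) (Fin 2) ℂ) ∈ S := by
      have h1 : (1 : Matrix (Fin 2) (Fin 2) ℂ) - !![1, 0; 0, 0] ∈ S :=
        S.sub_mem S.one_mem h00
      convert h1 using 1
      ext i j
      fin_cases i <;> fin_cases j <;> simp
    have h10 : (!![0, 0; 1, 0] : Matrix (Fin 2) (Fin 2) ℂ) ∈ S := by
      have h1 : !![0, 0; 0, 1] * Y * !![1, 0; 0, 0] ∈ S :=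
        S.mul_mem (S.mul_mem h11 hY) h00
      have h2 : (-(c * z₄ ^ 2))⁻¹ • (!![0, 0; 0, 1] * Y * !![1, 0; 0, 0]) ∈ S :=
        S.smul_mem h1 _
      convert h2 using 1
      ext i j
      fin_cases i <;> fin_cases j <;>
        simp [Y, Matrix.mul_apply, Fin.sum_univ_two] <;> field_simp
    rw [eq_top_iff]
    intro M _
    have hM : M = M 0 0 • !![1, 0; 0, 0] + M 0 1 • X + M 1 0 • !![0, 0; 1, 0]
        + M 1 1 • !![0, 0; 0, 1] := by
      ext i j
      fin_cases i <;> fin_cases j <;> simp [X]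
    rw [hM]
    exact S.add_mem (S.add_mem (S.add_mem (S.smul_mem h00 _) (S.smul_mem hX _))
      (S.smul_mem h10 _)) (S.smul_mem h11 _)
end

section
/- Let c, z₂, z₃, β ∈ ℂ with c ≠ 0, c³ ≠ 1, c³ ≠ −8, z₃ ≠ 0, and suppose (β + c²·z₂·z₃ + c²)² = 3c⁴·z₂²·z₃² + 3c⁴·z₂·z₃ + c⁴ − c·z₃³ + c⁴·z₂³·z₃³. Set X = [[0, 1], [0, 0]], Y = [[−β/(c·z₃), −(−c·z₂²·z₃ − c·z₂ + 2β/(c·z₃))/z₃], [−c·z₂·z₃ − c, β/(c·z₃)]], and Z = [[−1, z₂], [z₃, 1]] in Mat₂(ℂ). Then (X, Y, Z) is a matrix solution for S(1,1,c), and it is irreducible. -/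
set_option maxHeartbeats 1600000 in
/-- The first representative family of Table 3 (one-Jordan-block case,
normalized with z₄ = 1) is an irreducible matrix solution of S(1,1,c). -/
theorem table3_family1_irreducible_solution
    (c z₂ z₃ β : ℂ) (hc0 : c ≠ 0) (hc1 : c ^ 3 ≠ 1) (hc8 : c ^ 3 ≠ -8) (hz3 : z₃ ≠ 0)
    (hβ : (β + c ^ 2 * z₂ * z₃ + c ^ 2) ^ 2 =
      3 * c ^ 4 * z₂ ^ 2 * z₃ ^ 2 + 3 * c ^ 4 * z₂ * z₃ + c ^ 4 - c * z₃ ^ 3 +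
        c ^ 4 * z₂ ^ 3 * z₃ ^ 3) :
    let X : Matrix (Fin 2) (Fin 2) ℂ := !![0, 1; 0, 0]
    let Y : Matrix (Fin 2) (Fin 2) ℂ :=
      !![-β / (c * z₃), -(-(c * z₂ ^ 2 * z₃) - c * z₂ + 2 * β / (c * z₃)) / z₃;
         -(c * z₂ * z₃) - c, β / (c * z₃)]
    let Z : Matrix (Fin 2) (Fin 2) ℂ := !![-1, z₂; z₃, 1]
    (Y * Z + Z * Y + c • (X * X) = 0 ∧
     Z * X + X * Z + c • (Y * Y) = 0 ∧
     X * Y + Y * X + c • (Z * Z) = 0) ∧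
    Algebra.adjoin ℂ {X, Y, Z} = ⊤ := by
  intro X Y Z
  have key : β^2 + 2*β*c^2*z₂*z₃ + 2*β*c^2 - 2*c^4*z₂^2*z₃^2 - c^4*z₂*z₃ + c*z₃^3
      - c^4*z₂^3*z₃^3 = 0 := by linear_combination hβ
  constructor
  · refine ⟨?_, ?_, ?_⟩ <;> ext i j <;> fin_cases i <;> fin_cases j <;>
      simp [X, Y, Z, Matrix.mul_apply, Fin.sum_univ_two]
    all_goals try field_simp
    all_goals try ring
    all_goals try linear_combination key
    all_goals try linear_combination -key
    all_goals try linear_combination (c^2*z₃^2) * key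
    all_goals try linear_combination (1 + c^2*z₃^2) * key
    all_goals exact Or.inr trivial
  · have hXm : X ∈ Algebra.adjoin ℂ {X, Y, Z} := Algebra.subset_adjoin (by simp)
    have hZm : Z ∈ Algebra.adjoin ℂ {X, Y, Z} := Algebra.subset_adjoin (by simp)
    have h11 : (!![1, 0; 0, 0] : Matrix (Fin 2) (Fin 2) ℂ) ∈ Algebra.adjoin ℂ {X, Y, Z} := by
      have e : (!![1, 0; 0, 0] : Matrix (Fin 2) (Fin 2) ℂ) = z₃⁻¹ • (X * Z - X) := by
        ext i j
        fin_cases i <;> fin_cases j <;>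
          simp [X, Z, Matrix.mul_apply, Fin.sum_univ_two] <;> field_simp
      rw [e]
      exact Subalgebra.smul_mem _ (sub_mem (mul_mem hXm hZm) hXm) _
    have h22 : (!![0, 0; 0, 1] : Matrix (Fin 2) (Fin 2) ℂ) ∈ Algebra.adjoin ℂ {X, Y, Z} := by
      have e : (!![0, 0; 0, 1] : Matrix (Fin 2) (Fin 2) ℂ) = z₃⁻¹ • (Z * X + X) := by
        ext i j
        fin_cases i <;> fin_cases j <;>
          simp [X, Z, Matrix.mul_apply, Fin.sum_univ_two] <;> field_simp
      rw [e]
      exact Subalgebra.smul_mem _ (add_mem (mul_mem hZm hXm) hXm) _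
    have h21 : (!![0, 0; 1, 0] : Matrix (Fin 2) (Fin 2) ℂ) ∈ Algebra.adjoin ℂ {X, Y, Z} := by
      have e : (!![0, 0; 1, 0] : Matrix (Fin 2) (Fin 2) ℂ)
          = z₃⁻¹ • (Z + !![1, 0; 0, 0] - z₂ • X - !![0, 0; 0, 1]) := by
        ext i j
        fin_cases i <;> fin_cases j <;>
          simp [X, Z, Fin.sum_univ_two] <;> field_simp
      rw [e]
      exact Subalgebra.smul_mem _
        (sub_mem (sub_mem (add_mem hZm h11) (Subalgebra.smul_mem _ hXm _)) h22) _
    rw [eq_top_iff]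
    rintro M -
    have hM : M = M 0 0 • !![1, 0; 0, 0] + M 0 1 • X + M 1 0 • !![0, 0; 1, 0]
        + M 1 1 • !![0, 0; 0, 1] := by
      ext i j
      fin_cases i <;> fin_cases j <;> simp [X]
    rw [hM]
    exact add_mem (add_mem (add_mem (Subalgebra.smul_mem _ h11 _)
      (Subalgebra.smul_mem _ hXm _)) (Subalgebra.smul_mem _ h21 _))
      (Subalgebra.smul_mem _ h22 _)
end

section
/- Let c, y₄, z₄ ∈ ℂ with c ≠ 0, c³ ≠ 1, c³ ≠ −8, and y₄ ≠ 0. Set X = [[c·z₄²/(2y₄), 0], [0, −c·z₄²/(2y₄)]], Y = [[−y₄, −(y₄³ − z₄³)/y₄], [1, y₄]], and Z = [[−z₄, −z₄·(8y₄³ + c³·z₄³)/(4y₄²)], [0, z₄]] in Mat₂(ℂ). Then (X, Y, Z) is a matrix solution for S(1,1,c), and it is irreducible if and only if z₄ ≠ 0. -/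
/-! For `z₄ ≠ 0`, `X` is diagonal with the distinct eigenvalues `±c z₄² / (2 y₄)`, so the algebra
contains both diagonal matrix units; cutting `Y` and `Z` down by them gives the off-diagonal units,
because `Y₁₀ = 1` and `Y₀₁`, `Z₀₁` cannot both vanish when `c³ ≠ -8`. For `z₄ = 0` we have
`X = Z = 0`, and everything generated by `Y` alone commutes with `Y`. -/

open Matrix

theorem Matrix.subalgebra_eq_top_of_single_diag_mem {K n : Type*} [Field K] [Fintype n]
    [DecidableEq n] (A : Subalgebra K (Matrix n n K)) (hdiag : ∀ i, single i i (1 : K) ∈ A)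
    (hentry : ∀ i j, ∃ M ∈ A, M i j ≠ 0) : A = ⊤ := by
  have hsingle (i j : n) : single i j (1 : K) ∈ A := by
    obtain ⟨M, hM, hMij⟩ := hentry i j
    have key : (M i j)⁻¹ • (single i i 1 * M * single j j 1) = single i j (1 : K) := by
      rw [single_mul_mul_single, smul_single, one_mul, mul_one, smul_eq_mul, inv_mul_cancel₀ hMij]
    exact key ▸ A.smul_mem (A.mul_mem (A.mul_mem (hdiag i) hM) (hdiag j)) _
  refine eq_top_iff.2 fun M _ => ?_
  rw [matrix_eq_sum_single M]
  refine Subalgebra.sum_mem _ fun i _ => Subalgebra.sum_mem _ fun j _ => ?_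
  simpa [smul_single] using A.smul_mem (hsingle i j) (M i j)

theorem Matrix.subalgebra_fin_two_eq_top {K : Type*} [Field K]
    (A : Subalgebra K (Matrix (Fin 2) (Fin 2) K)) {a b : K} (hab : a ≠ b)
    (hD : !![a, 0; 0, b] ∈ A) (h01 : ∃ M ∈ A, M 0 1 ≠ 0) (h10 : ∃ M ∈ A, M 1 0 ≠ 0) :
    A = ⊤ := by
  have h00 : single (0 : Fin 2) 0 (1 : K) ∈ A := by
    have key : (a - b)⁻¹ • (!![a, 0; 0, b] - b • 1) = single (0 : Fin 2) 0 (1 : K) := by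
      ext i j
      fin_cases i <;> fin_cases j <;> simp [sub_ne_zero.2 hab]
    exact key ▸ A.smul_mem (A.sub_mem hD (A.smul_mem A.one_mem b)) _
  have h11 : single (1 : Fin 2) 1 (1 : K) ∈ A := by
    have key : (1 : Matrix (Fin 2) (Fin 2) K) - single 0 0 1 = single 1 1 1 := by
      ext i j
      fin_cases i <;> fin_cases j <;> simp
    exact key ▸ A.sub_mem A.one_mem h00
  refine subalgebra_eq_top_of_single_diag_mem A (Fin.forall_fin_two.2 ⟨h00, h11⟩) ?_
  simp only [Fin.forall_fin_two]
  exact ⟨⟨⟨1, A.one_mem, by simp⟩, h01⟩, ⟨h10, ⟨1, A.one_mem, by simp⟩⟩⟩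

theorem Algebra.adjoin_ne_top_of_forall_commute {R A : Type*} [CommSemiring R] [Semiring A]
    [Algebra R A] {s : Set A} {a b : A} (hs : ∀ x ∈ s, Commute a x) (hab : ¬Commute a b) :
    Algebra.adjoin R s ≠ ⊤ := fun htop =>
  hab (Algebra.commute_of_mem_adjoin_of_forall_mem_commute (htop ▸ Algebra.mem_top) hs)

theorem table4_family1_solution_irreducible_iff_general
    (c y₄ z₄ : ℂ) (hc0 : c ≠ 0) (hc8 : c ^ 3 ≠ -8) (hy : y₄ ≠ 0) :
    let X : Matrix (Fin 2) (Fin 2) ℂ :=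
      !![c * z₄ ^ 2 / (2 * y₄), 0; 0, -(c * z₄ ^ 2 / (2 * y₄))]
    let Y : Matrix (Fin 2) (Fin 2) ℂ :=
      !![-y₄, -((y₄ ^ 3 - z₄ ^ 3) / y₄); 1, y₄]
    let Z : Matrix (Fin 2) (Fin 2) ℂ :=
      !![-z₄, -(z₄ * (8 * y₄ ^ 3 + c ^ 3 * z₄ ^ 3) / (4 * y₄ ^ 2)); 0, z₄]
    (Y * Z + Z * Y + c • (X * X) = 0 ∧
     Z * X + X * Z + c • (Y * Y) = 0 ∧
     X * Y + Y * X + c • (Z * Z) = 0) ∧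
    (Algebra.adjoin ℂ {X, Y, Z} = ⊤ ↔ z₄ ≠ 0) := by
  intro X Y Z
  have hX : X ∈ Algebra.adjoin ℂ {X, Y, Z} := Algebra.subset_adjoin (by simp)
  have hY : Y ∈ Algebra.adjoin ℂ {X, Y, Z} := Algebra.subset_adjoin (by simp)
  have hZ : Z ∈ Algebra.adjoin ℂ {X, Y, Z} := Algebra.subset_adjoin (by simp)
  refine ⟨?_, ⟨fun htop hz => ?_, fun hz => ?_⟩⟩
  · refine ⟨?_, ?_, ?_⟩ <;> ext i j <;> fin_cases i <;> fin_cases j <;>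
      simp [X, Y, Z] <;> field_simp <;> ring
  · have hX0 : X = 0 := by ext i j; fin_cases i <;> fin_cases j <;> simp [X, hz]
    have hZ0 : Z = 0 := by ext i j; fin_cases i <;> fin_cases j <;> simp [Z, hz]
    refine Algebra.adjoin_ne_top_of_forall_commute (a := Y) (b := single 0 0 1) ?_ ?_ htop
    · simp [hX0, hZ0]
    · intro h
      simpa [Y] using congr_fun₂ h.eq 1 0
  · have hd : c * z₄ ^ 2 / (2 * y₄) ≠ -(c * z₄ ^ 2 / (2 * y₄)) :=
      self_ne_neg.2 (by simp [hc0, hz, hy])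
    have hYZ : y₄ ^ 3 - z₄ ^ 3 ≠ 0 ∨ 8 * y₄ ^ 3 + c ^ 3 * z₄ ^ 3 ≠ 0 := by
      by_contra! h
      have : (c ^ 3 + 8) * y₄ ^ 3 = 0 := by linear_combination h.2 + c ^ 3 * h.1
      exact hc8 (eq_neg_of_add_eq_zero_left
        ((mul_eq_zero.1 this).resolve_right (pow_ne_zero 3 hy)))
    refine subalgebra_fin_two_eq_top _ hd hX ?_ ⟨Y, hY, by simp [Y]⟩
    rcases hYZ with h | h
    · exact ⟨Y, hY, by simp [Y, h, hy]⟩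
    · exact ⟨Z, hZ, by simp [Z, h, hy, hz]⟩

/-- The first representative family of Table 4 (two-Jordan-block case,
normalized with y₃ = 1): a matrix solution of S(1,1,c), irreducible iff z₄ ≠ 0. -/
theorem table4_family1_solution_irreducible_iff
    (c y₄ z₄ : ℂ) (hc0 : c ≠ 0) (hc1 : c ^ 3 ≠ 1) (hc8 : c ^ 3 ≠ -8) (hy : y₄ ≠ 0) :
    let X : Matrix (Fin 2) (Fin 2) ℂ :=
      !![c * z₄ ^ 2 / (2 * y₄), 0; 0, -(c * z₄ ^ 2 / (2 * y₄))]
    let Y : Matrix (Fin 2) (Fin 2) ℂ :=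
      !![-y₄, -((y₄ ^ 3 - z₄ ^ 3) / y₄); 1, y₄]
    let Z : Matrix (Fin 2) (Fin 2) ℂ :=
      !![-z₄, -(z₄ * (8 * y₄ ^ 3 + c ^ 3 * z₄ ^ 3) / (4 * y₄ ^ 2)); 0, z₄]
    (Y * Z + Z * Y + c • (X * X) = 0 ∧
     Z * X + X * Z + c • (Y * Y) = 0 ∧
     X * Y + Y * X + c • (Z * Z) = 0) ∧
    (Algebra.adjoin ℂ {X, Y, Z} = ⊤ ↔ z₄ ≠ 0) :=
  table4_family1_solution_irreducible_iff_general c y₄ z₄ hc0 hc8 hy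
end

section
/- Let c, x₄ ∈ ℂ with c ≠ 0, c³ ≠ 1, c³ ≠ −8. Set X = [[−x₄, 0], [0, x₄]], Y = [[0, 0], [1, 0]], and Z = [[0, −c·x₄²], [0, 0]] in Mat₂(ℂ). Then (X, Y, Z) is a matrix solution for S(1,1,c), and it is irreducible if and only if x₄ ≠ 0. -/
/-!
When `x₄ = 0` the three matrices are lower triangular, so they generate only the lower
triangular subalgebra. When `x₄ ≠ 0`, `Y` and a nonzero multiple of `Z` are the two
off-diagonal matrix units, and these already generate `Mat₂`.
-/

open Matrix

namespace Matrix

variable {R : Type*} [CommSemiring R]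

theorem subalgebra_eq_top_of_forall_single_one_mem {n : Type*} [Fintype n] [DecidableEq n]
    (S : Subalgebra R (Matrix n n R)) (h : ∀ i j, single i j (1 : R) ∈ S) : S = ⊤ := by
  refine eq_top_iff.2 fun M _ => ?_
  rw [matrix_eq_sum_single M]
  refine S.sum_mem fun i _ => S.sum_mem fun j _ => ?_
  simpa using S.smul_mem (h i j) (M i j)

theorem subalgebra_fin_two_eq_top_of_single_mem (S : Subalgebra R (Matrix (Fin 2) (Fin 2) R))
    (h₀₁ : single 0 1 (1 : R) ∈ S) (h₁₀ : single 1 0 (1 : R) ∈ S) : S = ⊤ := by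
  refine subalgebra_eq_top_of_forall_single_one_mem S fun i j => ?_
  fin_cases i <;> fin_cases j
  · simpa using S.mul_mem h₀₁ h₁₀
  · exact h₀₁
  · exact h₁₀
  · simpa using S.mul_mem h₁₀ h₀₁

theorem adjoin_ne_top_of_forall_blockTriangular {m α : Type*} [Fintype m] [DecidableEq m]
    [LinearOrder α] [Nontrivial R] {b : m → α} {s : Set (Matrix m m R)}
    (hs : ∀ M ∈ s, M.BlockTriangular b) {i j : m} (hij : b j < b i) :
    Algebra.adjoin R s ≠ ⊤ := by
  intro htop
  have hle : Algebra.adjoin R s ≤ blockTriangularSubalgebra R R b := Algebra.adjoin_le hs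
  rw [htop] at hle
  have hsingle : (single i j (1 : R)).BlockTriangular b := hle Algebra.mem_top
  simpa using hsingle hij

theorem blockTriangular_toDual_fin_two_iff {α : Type*} [Zero α] (M : Matrix (Fin 2) (Fin 2) α) :
    M.BlockTriangular OrderDual.toDual ↔ M 0 1 = 0 := by
  refine ⟨fun h => h (by decide), fun h i j hij => ?_⟩
  fin_cases i <;> fin_cases j
  all_goals first | exact h | exact absurd hij (by decide)

end Matrix

theorem table4_family2_solution_irreducible_iff_general
    (c x₄ : ℂ) (hc0 : c ≠ 0) :
    let X : Matrix (Fin 2) (Fin 2) ℂ := !![-x₄, 0; 0, x₄]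
    let Y : Matrix (Fin 2) (Fin 2) ℂ := !![0, 0; 1, 0]
    let Z : Matrix (Fin 2) (Fin 2) ℂ := !![0, -(c * x₄ ^ 2); 0, 0]
    (Y * Z + Z * Y + c • (X * X) = 0 ∧
     Z * X + X * Z + c • (Y * Y) = 0 ∧
     X * Y + Y * X + c • (Z * Z) = 0) ∧
    (Algebra.adjoin ℂ {X, Y, Z} = ⊤ ↔ x₄ ≠ 0) := by
  intro X Y Z
  refine ⟨?_, fun htop hx₄ => ?_, fun hx₄ => ?_⟩
  · refine ⟨?_, ?_, ?_⟩ <;> ext i j <;> fin_cases i <;> fin_cases j <;> simp [X, Y, Z] <;> ring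
  · subst hx₄
    refine adjoin_ne_top_of_forall_blockTriangular (b := OrderDual.toDual) (i := 0) (j := 1)
      ?_ (by decide) htop
    simp [blockTriangular_toDual_fin_two_iff, X, Y, Z]
  · have hY : Y = single 1 0 1 := by ext i j; fin_cases i <;> fin_cases j <;> rfl
    have hZ : Z = -(c * x₄ ^ 2) • single 0 1 1 := by
      ext i j; fin_cases i <;> fin_cases j <;> simp [Z]
    have hcx : -(c * x₄ ^ 2) ≠ 0 := neg_ne_zero.2 (mul_ne_zero hc0 (pow_ne_zero 2 hx₄))
    set S := Algebra.adjoin ℂ {X, Y, Z}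
    refine subalgebra_fin_two_eq_top_of_single_mem S ?_ (hY ▸ Algebra.subset_adjoin (by simp))
    have hZS : Z ∈ S := Algebra.subset_adjoin (by simp)
    have h₀₁ := S.smul_mem hZS (-(c * x₄ ^ 2))⁻¹
    rwa [hZ, smul_smul, inv_mul_cancel₀ hcx, one_smul] at h₀₁

/-- The second representative family of Table 4 (two-Jordan-block case,
normalized with y₃ = 1): a matrix solution of S(1,1,c), irreducible iff x₄ ≠ 0. -/
theorem table4_family2_solution_irreducible_iff
    (c x₄ : ℂ) (hc0 : c ≠ 0) (hc1 : c ^ 3 ≠ 1) (hc8 : c ^ 3 ≠ -8) :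
    let X : Matrix (Fin 2) (Fin 2) ℂ := !![-x₄, 0; 0, x₄]
    let Y : Matrix (Fin 2) (Fin 2) ℂ := !![0, 0; 1, 0]
    let Z : Matrix (Fin 2) (Fin 2) ℂ := !![0, -(c * x₄ ^ 2); 0, 0]
    (Y * Z + Z * Y + c • (X * X) = 0 ∧
     Z * X + X * Z + c • (Y * Y) = 0 ∧
     X * Y + Y * X + c • (Z * Z) = 0) ∧
    (Algebra.adjoin ℂ {X, Y, Z} = ⊤ ↔ x₄ ≠ 0) :=
  table4_family2_solution_irreducible_iff_general c x₄ hc0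
end

section
/- Let c, y₄, z₄ ∈ ℂ with c ≠ 0, c³ ≠ 1, c³ ≠ −8, and z₄ ≠ 0. Set X = [[c·y₄²/(2z₄), 0], [0, −c·y₄²/(2z₄)]], Y = [[−y₄, −y₄·(8z₄³ + c³·y₄³)/(4z₄²)], [0, y₄]], and Z = [[−z₄, (y₄³ − z₄³)/z₄], [1, z₄]] in Mat₂(ℂ). Then (X, Y, Z) is a matrix solution for S(1,1,c), and it is irreducible if and only if y₄ ≠ 0. -/
/-!
`X` is diagonal with eigenvalues `±c y₄² / (2 z₄)`, distinct exactly when `y₄ ≠ 0`; then the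
generated algebra contains both diagonal idempotents, and compressing `Z` (whose `(1,0)` entry
is `1`) and `Y` or `Z` by them gives the two off-diagonal matrix units, because the `(0,1)`
entries of `Y` and `Z` cannot vanish together when `c³ ≠ -8`. When `y₄ = 0`, `X = Y = 0`, so
the algebra is generated by `Z` alone and is commutative.
-/

section MatrixSubalgebra

open Matrix

theorem Algebra.commute_of_adjoin_eq_top {R A : Type*} [CommSemiring R] [Semiring A] [Algebra R A]
    {s : Set A} (hs : adjoin R s = ⊤) (hcomm : ∀ a ∈ s, ∀ b ∈ s, Commute a b) (a b : A) :
    Commute a b := by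
  have mem_adjoin : ∀ x : A, x ∈ adjoin R s := fun x => hs ▸ Algebra.mem_top
  refine commute_of_mem_adjoin_of_forall_mem_commute (mem_adjoin b) fun x hx => ?_
  exact (commute_of_mem_adjoin_of_forall_mem_commute (mem_adjoin a) (hcomm x hx)).symm

theorem Matrix.not_commute_single_single {R n : Type*} [Semiring R] [Nontrivial R] [Fintype n]
    [DecidableEq n] {i j : n} (hij : i ≠ j) : ¬Commute (single i j (1 : R)) (single j i 1) := by
  intro h
  simpa [hij] using congr_fun (congr_fun h.eq i) i

theorem Subalgebra.eq_top_of_forall_single_one_mem {R n : Type*} [CommSemiring R] [Fintype n]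
    [DecidableEq n] (S : Subalgebra R (Matrix n n R)) (h : ∀ i j, single i j (1 : R) ∈ S) :
    S = ⊤ := by
  refine eq_top_iff.2 fun M _ => ?_
  rw [matrix_eq_sum_single M]
  refine S.sum_mem fun i _ => S.sum_mem fun j _ => ?_
  simpa using S.smul_mem (h i j) (M i j)

section Field

variable {K : Type*} [Field K]

theorem Subalgebra.single_one_mem_of_mul_mul {n : Type*} [Fintype n] [DecidableEq n]
    (S : Subalgebra K (Matrix n n K)) {i j k l : n} (hij : single i j 1 ∈ S)
    (hkl : single k l 1 ∈ S) {M : Matrix n n K} (hM : M ∈ S) (hjk : M j k ≠ 0) :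
    single i l (1 : K) ∈ S := by
  simpa [hjk] using S.smul_mem (S.mul_mem (S.mul_mem hij hM) hkl) (M j k)⁻¹

theorem Subalgebra.single_zero_zero_mem_of_diagonal_mem
    (S : Subalgebra K (Matrix (Fin 2) (Fin 2) K)) {a b : K} (hab : a ≠ b)
    (hD : diagonal ![a, b] ∈ S) : single 0 0 (1 : K) ∈ S := by
  have h : (a - b)⁻¹ • (diagonal ![a, b] - b • 1) = single 0 0 (1 : K) := by
    ext i j
    fin_cases i <;> fin_cases j <;> simp [sub_ne_zero.2 hab]
  exact h ▸ S.smul_mem (S.sub_mem hD (S.smul_mem S.one_mem b)) _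

theorem Subalgebra.eq_top_of_diagonal_mem (S : Subalgebra K (Matrix (Fin 2) (Fin 2) K))
    {a b : K} (hab : a ≠ b) (hD : diagonal ![a, b] ∈ S) {M N : Matrix (Fin 2) (Fin 2) K}
    (hM : M ∈ S) (hM₁₀ : M 1 0 ≠ 0) (hN : N ∈ S) (hN₀₁ : N 0 1 ≠ 0) : S = ⊤ := by
  have h₀₀ := S.single_zero_zero_mem_of_diagonal_mem hab hD
  have h₁₁ : single 1 1 (1 : K) ∈ S := by
    have h : (1 - single 0 0 1 : Matrix (Fin 2) (Fin 2) K) = single 1 1 1 := by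
      ext i j
      fin_cases i <;> fin_cases j <;> simp
    exact h ▸ S.sub_mem S.one_mem h₀₀
  have h₁₀ := S.single_one_mem_of_mul_mul h₁₁ h₀₀ hM hM₁₀
  have h₀₁ := S.single_one_mem_of_mul_mul h₀₀ h₁₁ hN hN₀₁
  refine S.eq_top_of_forall_single_one_mem fun i j => ?_
  fin_cases i <;> fin_cases j <;> assumption

end Field

end MatrixSubalgebra

/-- The defining relations of the Sklyanin algebra `S(1,1,c)`. -/
def IsSklyaninSolution {K A : Type*} [CommSemiring K] [Semiring A] [Algebra K A] (c : K)
    (X Y Z : A) : Prop :=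
  Y * Z + Z * Y + c • (X * X) = 0 ∧ Z * X + X * Z + c • (Y * Y) = 0 ∧
    X * Y + Y * X + c • (Z * Z) = 0

noncomputable section

namespace Table4Family3

def X (c y z : ℂ) : Matrix (Fin 2) (Fin 2) ℂ :=
  !![c * y ^ 2 / (2 * z), 0; 0, -(c * y ^ 2 / (2 * z))]

def Y (c y z : ℂ) : Matrix (Fin 2) (Fin 2) ℂ :=
  !![-y, -(y * (8 * z ^ 3 + c ^ 3 * y ^ 3) / (4 * z ^ 2)); 0, y]

def Z (y z : ℂ) : Matrix (Fin 2) (Fin 2) ℂ := !![-z, (y ^ 3 - z ^ 3) / z; 1, z]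

theorem isSklyaninSolution (c y : ℂ) {z : ℂ} (hz : z ≠ 0) :
    IsSklyaninSolution c (X c y z) (Y c y z) (Z y z) := by
  refine ⟨?_, ?_, ?_⟩ <;> ext i j <;> fin_cases i <;> fin_cases j <;>
    simp [X, Y, Z] <;> field_simp <;> ring

theorem X_eq_diagonal (c y z : ℂ) :
    X c y z = Matrix.diagonal ![c * y ^ 2 / (2 * z), -(c * y ^ 2 / (2 * z))] := by
  ext i j
  fin_cases i <;> fin_cases j <;> simp [X]

theorem Y_zero_one_ne_zero_or_Z_zero_one_ne_zero (y : ℂ) {c z : ℂ} (hc8 : c ^ 3 ≠ -8)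
    (hz : z ≠ 0) :
    Y c y z 0 1 ≠ 0 ∨ Z y z 0 1 ≠ 0 := by
  by_contra! h
  obtain ⟨hY, hZ⟩ := h
  simp only [Y, Z, Matrix.of_apply, Matrix.cons_val', Matrix.cons_val_one,
    Matrix.cons_val_fin_one, Matrix.cons_val_zero, neg_eq_zero, div_eq_zero_iff, mul_eq_zero,
    OfNat.ofNat_ne_zero, pow_eq_zero_iff, ne_eq, not_false_eq_true, hz, or_self, or_false,
    sub_eq_zero] at hY hZ
  rcases hY with rfl | hY
  · exact hz (by simpa using hZ.symm)
  · have h8z : (c ^ 3 + 8) * z ^ 3 = 0 := by linear_combination hY - c ^ 3 * hZ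
    simp [hz, add_eq_zero_iff_eq_neg, hc8] at h8z

theorem adjoin_eq_top {c y z : ℂ} (hc0 : c ≠ 0) (hc8 : c ^ 3 ≠ -8) (hz : z ≠ 0) (hy : y ≠ 0) :
    Algebra.adjoin ℂ {X c y z, Y c y z, Z y z} = ⊤ := by
  set S := Algebra.adjoin ℂ {X c y z, Y c y z, Z y z}
  have hx : c * y ^ 2 / (2 * z) ≠ -(c * y ^ 2 / (2 * z)) :=
    self_ne_neg.2 (by simp [hc0, hy, hz])
  have hX : X c y z ∈ S := Algebra.subset_adjoin (by simp)
  have hY : Y c y z ∈ S := Algebra.subset_adjoin (by simp)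
  have hZ : Z y z ∈ S := Algebra.subset_adjoin (by simp)
  rw [X_eq_diagonal] at hX
  obtain ⟨N, hN, hN₀₁⟩ : ∃ N ∈ S, N 0 1 ≠ 0 :=
    (Y_zero_one_ne_zero_or_Z_zero_one_ne_zero y hc8 hz).elim (⟨_, hY, ·⟩) (⟨_, hZ, ·⟩)
  exact S.eq_top_of_diagonal_mem hx hX hZ (by simp [Z]) hN hN₀₁

theorem adjoin_ne_top_of_y_eq_zero (c : ℂ) {y : ℂ} (z : ℂ) (hy : y = 0) :
    Algebra.adjoin ℂ {X c y z, Y c y z, Z y z} ≠ ⊤ := by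
  subst hy
  intro h
  have hX : X c 0 z = 0 := by ext i j; fin_cases i <;> fin_cases j <;> simp [X]
  have hY : Y c 0 z = 0 := by ext i j; fin_cases i <;> fin_cases j <;> simp [Y]
  refine Matrix.not_commute_single_single (R := ℂ) (zero_ne_one : (0 : Fin 2) ≠ 1) ?_
  refine Algebra.commute_of_adjoin_eq_top h ?_ _ _
  rw [hX, hY]
  rintro a (rfl | rfl | rfl) b (rfl | rfl | rfl) <;> simp

end Table4Family3

end

theorem table4_family3_solution_irreducible_iff_general
    (c y₄ z₄ : ℂ) (hc0 : c ≠ 0) (hc8 : c ^ 3 ≠ -8) (hz : z₄ ≠ 0) :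
    let X : Matrix (Fin 2) (Fin 2) ℂ :=
      !![c * y₄ ^ 2 / (2 * z₄), 0; 0, -(c * y₄ ^ 2 / (2 * z₄))]
    let Y : Matrix (Fin 2) (Fin 2) ℂ :=
      !![-y₄, -(y₄ * (8 * z₄ ^ 3 + c ^ 3 * y₄ ^ 3) / (4 * z₄ ^ 2)); 0, y₄]
    let Z : Matrix (Fin 2) (Fin 2) ℂ :=
      !![-z₄, (y₄ ^ 3 - z₄ ^ 3) / z₄; 1, z₄]
    (Y * Z + Z * Y + c • (X * X) = 0 ∧
     Z * X + X * Z + c • (Y * Y) = 0 ∧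
     X * Y + Y * X + c • (Z * Z) = 0) ∧
    (Algebra.adjoin ℂ {X, Y, Z} = ⊤ ↔ y₄ ≠ 0) := by
  intro X Y Z
  refine ⟨Table4Family3.isSklyaninSolution c y₄ hz,
    fun h hy => Table4Family3.adjoin_ne_top_of_y_eq_zero c z₄ hy h,
    Table4Family3.adjoin_eq_top hc0 hc8 hz⟩

/-- The third representative family of Table 4 (two-Jordan-block case,
normalized with z₃ = 1): a matrix solution of S(1,1,c), irreducible iff y₄ ≠ 0. -/
theorem table4_family3_solution_irreducible_iff
    (c y₄ z₄ : ℂ) (hc0 : c ≠ 0) (hc1 : c ^ 3 ≠ 1) (hc8 : c ^ 3 ≠ -8) (hz : z₄ ≠ 0) :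
    let X : Matrix (Fin 2) (Fin 2) ℂ :=
      !![c * y₄ ^ 2 / (2 * z₄), 0; 0, -(c * y₄ ^ 2 / (2 * z₄))]
    let Y : Matrix (Fin 2) (Fin 2) ℂ :=
      !![-y₄, -(y₄ * (8 * z₄ ^ 3 + c ^ 3 * y₄ ^ 3) / (4 * z₄ ^ 2)); 0, y₄]
    let Z : Matrix (Fin 2) (Fin 2) ℂ :=
      !![-z₄, (y₄ ^ 3 - z₄ ^ 3) / z₄; 1, z₄]
    (Y * Z + Z * Y + c • (X * X) = 0 ∧
     Z * X + X * Z + c • (Y * Y) = 0 ∧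
     X * Y + Y * X + c • (Z * Z) = 0) ∧
    (Algebra.adjoin ℂ {X, Y, Z} = ⊤ ↔ y₄ ≠ 0) :=
  table4_family3_solution_irreducible_iff_general c y₄ z₄ hc0 hc8 hz
end

section
/- Let X, Y ∈ Mat₂(ℂ) satisfy X·Y + Y·X = 0, and suppose the ℂ-subalgebra of Mat₂(ℂ) generated by X and Y is all of Mat₂(ℂ). Then there exist an invertible matrix Q ∈ Mat₂(ℂ) and complex numbers α, β with α·β ≠ 0 such that Q·X·Q⁻¹ = [[−α, 0], [0, α]] and Q·Y·Q⁻¹ = [[0, 1], [β, 0]]. -/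
open Matrix

private lemma commute_all {X Y Z : Matrix (Fin 2) (Fin 2) ℂ}
    (hirr : Algebra.adjoin ℂ {X, Y} = ⊤)
    (h1 : Z * X = X * Z) (h2 : Z * Y = Y * Z) (M : Matrix (Fin 2) (Fin 2) ℂ) :
    Z * M = M * Z := by
  have hM : M ∈ Algebra.adjoin ℂ ({X, Y} : Set _) := by rw [hirr]; trivial
  induction hM using Algebra.adjoin_induction with
  | mem x hx => rcases hx with rfl | rfl
                · exact h1
                · exact h2
  | algebraMap r => exact (Algebra.commutes r Z).symm
  | add x y _ _ hx hy => rw [mul_add, add_mul, hx, hy]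
  | mul x y _ _ hx hy => rw [← mul_assoc, hx, mul_assoc, hy, mul_assoc]

private lemma central_scalar {Z : Matrix (Fin 2) (Fin 2) ℂ}
    (hZ : ∀ M, Z * M = M * Z) : ∃ c : ℂ, Z = c • 1 := by
  have h1 := hZ !![0,1;0,0]
  have h2 := hZ !![0,0;1,0]
  refine ⟨Z 0 0, ?_⟩
  have e1 := congrFun (congrFun h1 0) 0
  have e2 := congrFun (congrFun h1 0) 1
  have e3 := congrFun (congrFun h2 0) 0
  simp [Matrix.mul_apply, Fin.sum_univ_two] at e1 e2 e3
  ext i j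
  fin_cases i <;> fin_cases j <;>
    simp [Matrix.one_apply, ← e1, e2, e3]

private lemma not_scalar {X Y : Matrix (Fin 2) (Fin 2) ℂ}
    (hirr : Algebra.adjoin ℂ {X, Y} = ⊤) (c : ℂ) : X ≠ c • 1 := by
  intro hX
  have hYX : Y * X = X * Y := by rw [hX]; simp [mul_smul_comm, smul_mul_assoc]
  have hYY : Y * Y = Y * Y := rfl
  obtain ⟨d, hY⟩ := central_scalar (commute_all hirr hYX hYY)
  have hcomm : (!![0,1;0,0] : Matrix (Fin 2) (Fin 2) ℂ) * !![0,0;1,0]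
      = !![0,0;1,0] * !![0,1;0,0] := by
    refine commute_all hirr ?_ ?_ _
    · rw [hX]; simp [mul_smul_comm, smul_mul_assoc]
    · rw [hY]; simp [mul_smul_comm, smul_mul_assoc]
  have := congrFun (congrFun hcomm 0) 0
  simp [Matrix.mul_apply, Fin.sum_univ_two] at this
private lemma prop_lemma {u w : Fin 2 → ℂ} (hu : u ≠ 0)
    (hd : w 0 * u 1 - w 1 * u 0 = 0) : ∃ t : ℂ, w = t • u := by
  by_cases h0 : u 0 = 0
  · have h1 : u 1 ≠ 0 := by
      intro h1; apply hu; funext i; fin_cases i <;> simp [h0, h1]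
    have hw0 : w 0 = 0 := by
      have : w 0 * u 1 = 0 := by rw [h0] at hd; linear_combination hd
      rcases mul_eq_zero.1 this with h | h
      · exact h
      · exact absurd h h1
    refine ⟨w 1 / u 1, funext fun i => ?_⟩
    fin_cases i
    · simp [hw0, h0]
    · simp; field_simp
  · refine ⟨w 0 / u 0, funext fun i => ?_⟩
    fin_cases i
    · simp; field_simp
    · simp; field_simp; linear_combination -hd
private lemma no_common_eigvec {X Y : Matrix (Fin 2) (Fin 2) ℂ}
    (hirr : Algebra.adjoin ℂ {X, Y} = ⊤) {u : Fin 2 → ℂ} (hu : u ≠ 0)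
    {cx cy : ℂ} (hx : X *ᵥ u = cx • u) (hy : Y *ᵥ u = cy • u) : False := by
  let S : Subalgebra ℂ (Matrix (Fin 2) (Fin 2) ℂ) :=
    { carrier := {M | ∃ t : ℂ, M *ᵥ u = t • u}
      mul_mem' := by
        rintro A B ⟨s, hs⟩ ⟨t, ht⟩
        exact ⟨s * t, by rw [← Matrix.mulVec_mulVec, ht, Matrix.mulVec_smul, hs,
          smul_smul, mul_comm]⟩
      add_mem' := by
        rintro A B ⟨s, hs⟩ ⟨t, ht⟩
        exact ⟨s + t, by rw [Matrix.add_mulVec, hs, ht, add_smul]⟩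
      algebraMap_mem' := by
        intro r
        refine ⟨r, ?_⟩
        have : (algebraMap ℂ (Matrix (Fin 2) (Fin 2) ℂ) r) = r • 1 := by
          simp [Algebra.algebraMap_eq_smul_one]
        rw [this, Matrix.smul_mulVec, Matrix.one_mulVec] }
  have hS : ∀ M : Matrix (Fin 2) (Fin 2) ℂ, M ∈ S := by
    intro M
    have : Algebra.adjoin ℂ ({X, Y} : Set (Matrix (Fin 2) (Fin 2) ℂ)) ≤ S :=
      Algebra.adjoin_le (by rintro M (rfl | rfl); exacts [⟨cx, hx⟩, ⟨cy, hy⟩])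
    exact this (hirr ▸ Algebra.mem_top)
  by_cases h0 : u 0 = 0
  · have h1 : u 1 ≠ 0 := by
      intro h1; apply hu; funext i; fin_cases i <;> simp [h0, h1]
    obtain ⟨t, ht⟩ := hS !![0,1;0,0]
    have e0 := congrFun ht 0
    have e1 := congrFun ht 1
    simp [Matrix.mulVec, dotProduct, Fin.sum_univ_two, h0] at e0 e1
    exact h1 e0
  · obtain ⟨t, ht⟩ := hS !![0,0;1,0]
    have e0 := congrFun ht 0
    have e1 := congrFun ht 1
    simp [Matrix.mulVec, dotProduct, Fin.sum_univ_two] at e0 e1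
    rcases e0 with h | h
    · rw [h] at e1; simp at e1; exact h0 e1
    · exact h0 h
private lemma sq_scalar {X Y : Matrix (Fin 2) (Fin 2) ℂ}
    (h : X * Y + Y * X = 0) (hirr : Algebra.adjoin ℂ {X, Y} = ⊤) :
    ∃ s : ℂ, s ≠ 0 ∧ X * X = s • 1 ∧ X 1 1 = - X 0 0 := by
  have hxy : X * Y = -(Y * X) := eq_neg_of_add_eq_zero_left h
  have hZY : (X * X) * Y = Y * (X * X) := by
    calc (X * X) * Y = X * (X * Y) := mul_assoc _ _ _
    _ = -(X * (Y * X)) := by rw [hxy, mul_neg]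
    _ = -((X * Y) * X) := by rw [mul_assoc]
    _ = -((-(Y * X)) * X) := by rw [hxy]
    _ = (Y * X) * X := by rw [neg_mul, neg_neg]
    _ = Y * (X * X) := mul_assoc _ _ _
  obtain ⟨s, hs⟩ := central_scalar (commute_all hirr (mul_assoc X X X) hZY)
  have f00 := congrFun (congrFun hs 0) 0
  have f01 := congrFun (congrFun hs 0) 1
  have f10 := congrFun (congrFun hs 1) 0
  have f11 := congrFun (congrFun hs 1) 1
  simp [Matrix.mul_apply, Fin.sum_univ_two, Matrix.one_apply] at f00 f01 f10 f11
  have hd : X 1 1 = - X 0 0 := by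
    by_contra hne
    have hsum : X 0 0 + X 1 1 ≠ 0 := fun hc => hne (by linear_combination hc)
    have hb : X 0 1 = 0 := by
      rcases mul_eq_zero.1 (show X 0 1 * (X 0 0 + X 1 1) = 0 by
        linear_combination f01) with h' | h'
      · exact h'
      · exact absurd h' hsum
    have hc : X 1 0 = 0 := by
      rcases mul_eq_zero.1 (show X 1 0 * (X 0 0 + X 1 1) = 0 by
        linear_combination f10) with h' | h'
      · exact h'
      · exact absurd h' hsum
    have had : X 0 0 = X 1 1 := by
      rcases mul_eq_zero.1 (show (X 0 0 - X 1 1) * (X 0 0 + X 1 1) = 0 by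
        linear_combination f00 - f11 + X 1 0 * hb - X 0 1 * hc) with h' | h'
      · linear_combination h'
      · exact absurd h' hsum
    exact not_scalar hirr (X 0 0) (by
      ext i j; fin_cases i <;> fin_cases j <;>
        simp [Matrix.one_apply, hb, hc, had.symm])
  refine ⟨s, ?_, hs, hd⟩
  intro hs0
  rw [hs0] at f00
  have g00 := congrFun (congrFun h 0) 0
  have g01 := congrFun (congrFun h 0) 1
  simp [Matrix.mul_apply, Fin.sum_univ_two] at g00 g01
  by_cases hb : X 0 1 = 0
  · have ha : X 0 0 = 0 := by
      have : X 0 0 * X 0 0 = 0 := by linear_combination f00 - X 0 1 * (by rfl : X 1 0 = X 1 0) - X 1 0 * hb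
      exact mul_self_eq_zero.1 this
    have hc : X 1 0 ≠ 0 := by
      intro hc
      exact not_scalar hirr 0 (by
        ext i j; fin_cases i <;> fin_cases j <;>
          simp [ha, hb, hc, hd, Matrix.one_apply])
    have hq : Y 0 1 = 0 := by
      have : Y 0 1 * X 1 0 = 0 := by
        linear_combination g00 - (2 * Y 0 0) * ha - Y 1 0 * hb
      rcases mul_eq_zero.1 this with h' | h'
      · exact h'
      · exact absurd h' hc
    refine no_common_eigvec hirr (u := ![0,1]) (by
      intro hu; have := congrFun hu 1; simp at this)
      (cx := 0) (cy := Y 1 1) ?_ ?_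
    · funext i; fin_cases i <;>
        simp [Matrix.mulVec, dotProduct, Fin.sum_univ_two, hb, hd, ha]
    · funext i; fin_cases i <;>
        simp [Matrix.mulVec, dotProduct, Fin.sum_univ_two, hq]
  · have hu : (![X 0 1, -X 0 0] : Fin 2 → ℂ) ≠ 0 := by
      intro hu'; exact hb (by simpa using congrFun hu' 0)
    have hXu : X *ᵥ ![X 0 1, -X 0 0] = (0:ℂ) • ![X 0 1, -X 0 0] := by
      funext i; fin_cases i
      · simp [Matrix.mulVec, dotProduct, Fin.sum_univ_two]; ring
      · simp [Matrix.mulVec, dotProduct, Fin.sum_univ_two, hd]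
        linear_combination f00
    obtain ⟨t, ht⟩ := prop_lemma (w := Y *ᵥ ![X 0 1, -X 0 0]) hu (by
      simp [Matrix.mulVec, dotProduct, Fin.sum_univ_two]
      linear_combination (-(X 0 1)) * g00 + Y 0 1 * f00 + X 0 0 * g01
        - (X 0 0 * Y 0 1) * hd)
    exact no_common_eigvec hirr hu hXu ht
/-- Every 2-dimensional irreducible representation of ℂ₋₁[x,y] is, up to
simultaneous conjugation, of the form x ↦ diag(−α, α), y ↦ [[0,1],[β,0]]
with αβ ≠ 0. -/
theorem skew_poly_two_dim_irrep_classification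
    (X Y : Matrix (Fin 2) (Fin 2) ℂ) (h : X * Y + Y * X = 0)
    (hirr : Algebra.adjoin ℂ {X, Y} = ⊤) :
    ∃ (Q : Matrix (Fin 2) (Fin 2) ℂ) (α β : ℂ), IsUnit Q ∧ α * β ≠ 0 ∧
      Q * X * Q⁻¹ = !![-α, 0; 0, α] ∧ Q * Y * Q⁻¹ = !![0, 1; β, 0] := by
  obtain ⟨s, hs0, hsX, hdX⟩ := sq_scalar h hirr
  obtain ⟨δ, hδ0, hsY, -⟩ := sq_scalar (X := Y) (Y := X)
    (by rw [add_comm]; exact h) (by rwa [Set.pair_comm])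
  have f00 := congrFun (congrFun hsX 0) 0
  simp [Matrix.mul_apply, Fin.sum_univ_two, Matrix.one_apply] at f00
  have key : ∃ (α : ℂ) (v : Fin 2 → ℂ), α ≠ 0 ∧ v ≠ 0 ∧ X *ᵥ v = α • v := by
    by_cases hb : X 0 1 = 0
    · refine ⟨-(X 0 0), ![0, 1], ?_, ?_, ?_⟩
      · intro h0
        apply hs0
        have : X 0 0 = 0 := by linear_combination -h0
        rw [← f00, this, hb]; ring
      · intro h0; have := congrFun h0 1; simp at this
      · funext i; fin_cases i <;>
          simp [Matrix.mulVec, dotProduct, Fin.sum_univ_two, hb, hdX]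
    · obtain ⟨α, hα2⟩ := IsAlgClosed.exists_pow_nat_eq s (n := 2) (by norm_num)
      refine ⟨α, ![X 0 1, α - X 0 0], ?_, ?_, ?_⟩
      · intro h0; rw [h0] at hα2; simp at hα2; exact hs0 hα2.symm
      · intro h0; exact hb (by simpa using congrFun h0 0)
      · funext i; fin_cases i
        · simp [Matrix.mulVec, dotProduct, Fin.sum_univ_two]; ring
        · simp [Matrix.mulVec, dotProduct, Fin.sum_univ_two]
          linear_combination f00 - hα2 + (α - X 0 0) * hdX
  obtain ⟨α, v, hα, hv, hXv⟩ := key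
  set w := Y *ᵥ v with hw_def
  have hxy : X * Y = -(Y * X) := eq_neg_of_add_eq_zero_left h
  have hXw : X *ᵥ w = (-α) • w := by
    rw [hw_def, Matrix.mulVec_mulVec, hxy, Matrix.neg_mulVec,
      ← Matrix.mulVec_mulVec, hXv, Matrix.mulVec_smul, ← neg_smul]
  have hYw : Y *ᵥ w = δ • v := by
    rw [hw_def, Matrix.mulVec_mulVec, hsY, Matrix.smul_mulVec,
      Matrix.one_mulVec]
  have hw : w ≠ 0 := by
    intro h0
    rw [h0, Matrix.mulVec_zero] at hYw
    rcases smul_eq_zero.1 hYw.symm with h4 | h4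
    · exact hδ0 h4
    · exact hv h4
  have hdet : w 0 * v 1 - w 1 * v 0 ≠ 0 := by
    intro hdd
    obtain ⟨t, ht⟩ := prop_lemma hv hdd
    have h2 : (-α) • w = α • w := by
      rw [← hXw, ht, Matrix.mulVec_smul, hXv, smul_smul, mul_comm, ← smul_smul]
    have h3 : (α + α) • w = 0 := by
      have := congrArg (· + α • w) h2
      simpa [add_smul, neg_smul] using this.symm
    rcases smul_eq_zero.1 h3 with h4 | h4
    · exact hα (add_self_eq_zero.1 h4)
    · exact hw h4
  set P : Matrix (Fin 2) (Fin 2) ℂ := !![w 0, v 0; w 1, v 1] with hP_def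
  have hPdet : IsUnit P.det := by
    rw [hP_def, Matrix.det_fin_two_of, isUnit_iff_ne_zero]
    intro h0; exact hdet (by linear_combination h0)
  -- entrywise equations
  have ew0 := congrFun hXw 0
  have ew1 := congrFun hXw 1
  have ev0 := congrFun hXv 0
  have ev1 := congrFun hXv 1
  have eyw0 := congrFun hYw 0
  have eyw1 := congrFun hYw 1
  have eyv0 : Y 0 0 * v 0 + Y 0 1 * v 1 = w 0 := by
    rw [hw_def]; simp [Matrix.mulVec, dotProduct, Fin.sum_univ_two]
  have eyv1 : Y 1 0 * v 0 + Y 1 1 * v 1 = w 1 := by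
    rw [hw_def]; simp [Matrix.mulVec, dotProduct, Fin.sum_univ_two]
  simp [Matrix.mulVec, dotProduct, Fin.sum_univ_two] at ew0 ew1 ev0 ev1 eyw0 eyw1
  have hXP : X * P = P * !![-α, 0; 0, α] := by
    ext i j
    fin_cases i <;> fin_cases j <;>
      simp [hP_def, Matrix.mul_apply, Fin.sum_univ_two]
    · linear_combination ew0
    · linear_combination ev0
    · linear_combination ew1
    · linear_combination ev1
  have hYP : Y * P = P * !![0, 1; δ, 0] := by
    ext i j
    fin_cases i <;> fin_cases j <;>
      simp [hP_def, Matrix.mul_apply, Fin.sum_univ_two]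
    · linear_combination eyw0
    · linear_combination eyv0
    · linear_combination eyw1
    · linear_combination eyv1
  refine ⟨P⁻¹, α, δ, ?_, mul_ne_zero hα hδ0, ?_, ?_⟩
  · rw [Matrix.isUnit_iff_isUnit_det, Matrix.det_nonsing_inv, isUnit_iff_ne_zero]
    simp only [Ring.inverse_eq_inv']
    exact inv_ne_zero (isUnit_iff_ne_zero.1 hPdet)
  · rw [Matrix.nonsing_inv_nonsing_inv _ hPdet, mul_assoc, hXP, ← mul_assoc,
      Matrix.nonsing_inv_mul _ hPdet, one_mul]
  · rw [Matrix.nonsing_inv_nonsing_inv _ hPdet, mul_assoc, hYP, ← mul_assoc,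
      Matrix.nonsing_inv_mul _ hPdet, one_mul]
end

section
/- Let α, β, α', β' ∈ ℂ with α·β ≠ 0 and α'·β' ≠ 0. Set X = [[−α, 0], [0, α]], Y = [[0, 1], [β, 0]], X' = [[−α', 0], [0, α']], Y' = [[0, 1], [β', 0]]. Then there exists an invertible Q ∈ Mat₂(ℂ) with Q·X·Q⁻¹ = X' and Q·Y·Q⁻¹ = Y' if and only if α'² = α² and β' = β. -/
/-- Two irreducible representatives ψ_{α,β} and ψ_{α',β'} of ℂ₋₁[x,y] are
equivalent iff α'² = α² and β' = β. -/
theorem skew_poly_rep_equivalence_iff (α β α' β' : ℂ)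
    (hαβ : α * β ≠ 0) (hαβ' : α' * β' ≠ 0) :
    (∃ Q : Matrix (Fin 2) (Fin 2) ℂ, IsUnit Q ∧
      Q * !![-α, 0; 0, α] * Q⁻¹ = !![-α', 0; 0, α'] ∧
      Q * !![0, 1; β, 0] * Q⁻¹ = !![0, 1; β', 0]) ↔
    α' ^ 2 = α ^ 2 ∧ β' = β := by
  have hβ : β ≠ 0 := fun h => hαβ (by simp [h])
  constructor
  · rintro ⟨Q, hQ, hX, hY⟩
    have hdX := congrArg Matrix.det hX
    rw [Matrix.det_conj hQ] at hdX
    have hdY := congrArg Matrix.det hY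
    rw [Matrix.det_conj hQ] at hdY
    rw [Matrix.det_fin_two_of, Matrix.det_fin_two_of] at hdX hdY
    exact ⟨by linear_combination hdX, by linear_combination hdY⟩
  · rintro ⟨hA, rfl⟩
    rcases sq_eq_sq_iff_eq_or_eq_neg.mp hA with h | h
    · exact ⟨1, isUnit_one, by subst h; simp, by simp⟩
    · set Q : Matrix (Fin 2) (Fin 2) ℂ := !![0, 1; β', 0] with hQdef
      have hdet : IsUnit Q.det := by
        rw [hQdef, Matrix.det_fin_two_of]
        simpa using hβ
      haveI : Invertible Q := Q.invertibleOfIsUnitDet hdet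
      refine ⟨Q, (Matrix.isUnit_iff_isUnit_det Q).mpr hdet, ?_, ?_⟩
      · rw [Matrix.mul_inv_eq_iff_eq_mul_of_invertible]
        ext i j
        fin_cases i <;> fin_cases j <;>
          simp [hQdef, Matrix.mul_apply, Fin.sum_univ_two, h] <;> ring
      · rw [Matrix.mul_inv_eq_iff_eq_mul_of_invertible]
end

section
/- Let A = ℂ₋₁[x,y] be the quotient of the free associative ℂ-algebra on generators x, y by the two-sided ideal generated by xy + yx, and let x̄, ȳ denote the images of x, y in A. Then the center of A equals the ℂ-subalgebra of A generated by x̄² and ȳ². -/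
/-- The defining relation xy + yx = 0 of the skew polynomial ring ℂ₋₁[x,y],
on generators x = ι 0, y = ι 1 of the free algebra. -/
inductive SkewRel : FreeAlgebra ℂ (Fin 2) → FreeAlgebra ℂ (Fin 2) → Prop
  | rel : SkewRel
      (FreeAlgebra.ι ℂ (0 : Fin 2) * FreeAlgebra.ι ℂ (1 : Fin 2) +
       FreeAlgebra.ι ℂ (1 : Fin 2) * FreeAlgebra.ι ℂ (0 : Fin 2)) 0

/-- The skew polynomial ring ℂ₋₁[x,y] = ℂ⟨x,y⟩/(xy + yx). -/
abbrev SkewPoly := RingQuot SkewRel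

/-!
Since yx = -xy, the monomials x^a y^b span ℂ₋₁[x,y]; they are linearly independent because
in the representation on ℂ[s,t] in which x multiplies by s and y sends f(s,t) to t·f(-s,t),
x^a y^b maps 1 to s^a t^b. Now x · x^a y^b = x^(a+1) y^b while x^a y^b · x = (-1)^b x^(a+1) y^b,
and similarly y · x^a y^b = (-1)^a x^a y^(b+1) = (-1)^a x^a y^b · y, so comparing coefficients
in xz = zx and yz = zy kills every monomial of a central z with an odd exponent. Conversely
x² and y² commute with both generators.
-/

theorem Subalgebra.centralizer_eq_center_of_adjoin_eq_top {R A : Type*} [CommSemiring R]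
    [Semiring A] [Algebra R A] {s : Set A} (hs : Algebra.adjoin R s = ⊤) :
    Subalgebra.centralizer R s = Subalgebra.center R A := by
  refine le_antisymm (fun a ha => Subalgebra.mem_center_iff.mpr fun b => ?_)
    (Subalgebra.center_le_centralizer R s)
  have hb : b ∈ Subalgebra.centralizer R (Subalgebra.centralizer R s) :=
    Algebra.adjoin_le_centralizer_centralizer R s (hs ▸ Algebra.mem_top)
  exact ((Subalgebra.mem_centralizer_iff R).mp hb a ha).symm

theorem Module.Basis.repr_apply_eq_mul_of_apply_eq_smul {ι κ R M N : Type*} [CommSemiring R]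
    [AddCommMonoid M] [Module R M] [AddCommMonoid N] [Module R N]
    (b : Module.Basis ι R M) (b' : Module.Basis κ R N) (f : M →ₗ[R] N) {s : ι → κ}
    (hs : Function.Injective s) (c : ι → R) (hf : ∀ i, f (b i) = c i • b' (s i))
    (m : M) (i : ι) : b'.repr (f m) (s i) = c i * b.repr m i := by
  classical
  have : Finsupp.lapply (s i) ∘ₗ b'.repr.toLinearMap ∘ₗ f =
      c i • (Finsupp.lapply i ∘ₗ b.repr.toLinearMap) := by
    refine b.ext fun j => ?_
    by_cases hji : j = i
    · subst hji; simp [hf]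
    · simp [hf, hji, hs.ne hji]
  simpa using LinearMap.congr_fun this m

theorem MvPolynomial.linearIndependent_X_pow_mul_X_pow {σ R : Type*} [CommSemiring R]
    {i j : σ} (hij : i ≠ j) :
    LinearIndependent R fun p : ℕ × ℕ => (X i ^ p.1 * X j ^ p.2 : MvPolynomial σ R) := by
  have hinj :
      Function.Injective fun p : ℕ × ℕ => Finsupp.single i p.1 + Finsupp.single j p.2 := by
    intro p q h
    have hi := DFunLike.congr_fun h i
    have hj := DFunLike.congr_fun h j
    simp [hij, hij.symm] at hi hj
    exact Prod.ext hi hj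
  convert (basisMonomials σ R).linearIndependent.comp _ hinj with p
  simp [X_pow_eq_monomial, monomial_mul]

namespace SkewPoly

noncomputable def x : SkewPoly := RingQuot.mkAlgHom ℂ SkewRel (FreeAlgebra.ι ℂ 0)

noncomputable def y : SkewPoly := RingQuot.mkAlgHom ℂ SkewRel (FreeAlgebra.ι ℂ 1)

theorem x_mul_y_add_y_mul_x : x * y + y * x = 0 := by
  simp only [x, y, ← map_mul, ← map_add, RingQuot.mkAlgHom_rel ℂ SkewRel.rel, map_zero]

theorem semiconjBy_y_x : SemiconjBy y x ((-1 : ℂ) • x) := by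
  rw [SemiconjBy, smul_mul_assoc]
  exact (eq_neg_of_add_eq_zero_right x_mul_y_add_y_mul_x).trans (neg_one_smul ℂ _).symm

theorem adjoin_x_y : Algebra.adjoin ℂ {x, y} = ⊤ := by
  have hxy : ({x, y} : Set SkewPoly) =
      RingQuot.mkAlgHom ℂ SkewRel '' Set.range (FreeAlgebra.ι ℂ) := by
    ext
    simp [x, y, Fin.exists_fin_two, eq_comm]
  rw [hxy, Algebra.adjoin_image, FreeAlgebra.adjoin_range_ι, Algebra.map_top,
    AlgHom.range_eq_top]
  exact RingQuot.mkAlgHom_surjective ℂ SkewRel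

theorem y_mul_x_pow (a : ℕ) : y * x ^ a = (-1 : ℂ) ^ a • (x ^ a * y) := by
  rw [(semiconjBy_y_x.pow_right a).eq, smul_pow, smul_mul_assoc]

theorem y_pow_mul_x_pow (a b : ℕ) : y ^ b * x ^ a = (-1 : ℂ) ^ (a * b) • (x ^ a * y ^ b) := by
  induction b with
  | zero => simp
  | succ b ih =>
    rw [pow_succ', mul_assoc, ih, mul_smul_comm, ← mul_assoc, y_mul_x_pow, smul_mul_assoc,
      smul_smul, mul_assoc, ← pow_succ', ← pow_add, Nat.mul_succ]

noncomputable def monomial (p : ℕ × ℕ) : SkewPoly := x ^ p.1 * y ^ p.2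

theorem monomial_mul_monomial (p q : ℕ × ℕ) :
    monomial p * monomial q = (-1 : ℂ) ^ (q.1 * p.2) • monomial (p + q) := by
  simp only [monomial, Prod.fst_add, Prod.snd_add, pow_add]
  rw [mul_assoc, ← mul_assoc (y ^ p.2), y_pow_mul_x_pow, smul_mul_assoc, mul_smul_comm,
    mul_assoc, ← mul_assoc]

theorem monomial_one_zero : monomial (1, 0) = x := by simp [monomial]

theorem monomial_zero_one : monomial (0, 1) = y := by simp [monomial]

theorem span_range_monomial : Submodule.span ℂ (Set.range monomial) = ⊤ := by
  set T := Submodule.span ℂ (Set.range monomial)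
  have hmem (p : ℕ × ℕ) : monomial p ∈ T := Submodule.subset_span ⟨p, rfl⟩
  have hmul : T * T ≤ T := by
    rw [Submodule.span_mul_span, Submodule.span_le]
    rintro _ ⟨_, ⟨p, rfl⟩, _, ⟨q, rfl⟩, rfl⟩
    change monomial p * monomial q ∈ T
    rw [monomial_mul_monomial]
    exact T.smul_mem _ (hmem _)
  let S := T.toSubalgebra (by simpa [monomial] using hmem 0)
    fun _ _ ha hb => hmul (Submodule.mul_mem_mul ha hb)
  have hS : Algebra.adjoin ℂ {x, y} ≤ S := by
    rw [Algebra.adjoin_le_iff, Set.pair_subset_iff, ← monomial_one_zero, ← monomial_zero_one]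
    exact ⟨hmem _, hmem _⟩
  rw [adjoin_x_y, top_le_iff] at hS
  exact congrArg Subalgebra.toSubmodule hS

open MvPolynomial in
noncomputable def toEnd : SkewPoly →ₐ[ℂ] Module.End ℂ (MvPolynomial (Fin 2) ℂ) :=
  RingQuot.liftAlgHom ℂ ⟨FreeAlgebra.lift ℂ ![LinearMap.mulLeft ℂ (X 0),
      LinearMap.mulLeft ℂ (X 1) ∘ₗ (aeval ![-X 0, X 1]).toLinearMap], by
    rintro _ _ ⟨⟩
    refine LinearMap.ext fun f => ?_
    simp [mul_left_comm]⟩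

open MvPolynomial in
theorem toEnd_monomial_one (p : ℕ × ℕ) : toEnd (monomial p) 1 = X 0 ^ p.1 * X 1 ^ p.2 := by
  have hx : toEnd x = LinearMap.mulLeft ℂ (X 0) := by simp [toEnd, x]
  have hy (f : MvPolynomial (Fin 2) ℂ) : toEnd y f = X 1 * aeval ![-X 0, X 1] f := by
    simp [toEnd, y]
  have hyb (b : ℕ) : (toEnd y ^ b) 1 = (X 1 : MvPolynomial (Fin 2) ℂ) ^ b := by
    induction b with
    | zero => rfl
    | succ b ih => rw [pow_succ', Module.End.mul_apply, ih, hy, pow_succ']; simp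
  rw [monomial, map_mul, map_pow, map_pow, Module.End.mul_apply, hyb, hx,
    LinearMap.pow_mulLeft, LinearMap.mulLeft_apply]

open MvPolynomial in
theorem linearIndependent_monomial : LinearIndependent ℂ monomial := by
  refine LinearIndependent.of_comp (LinearMap.applyₗ 1 ∘ₗ toEnd.toLinearMap) ?_
  have heval : (LinearMap.applyₗ 1 ∘ₗ toEnd.toLinearMap) ∘ monomial =
      fun p : ℕ × ℕ => (X 0 ^ p.1 * X 1 ^ p.2 : MvPolynomial (Fin 2) ℂ) :=
    funext toEnd_monomial_one
  rw [heval]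
  exact linearIndependent_X_pow_mul_X_pow zero_ne_one

noncomputable def basisMonomial : Module.Basis (ℕ × ℕ) ℂ SkewPoly :=
  .mk linearIndependent_monomial span_range_monomial.ge

@[simp]
theorem basisMonomial_apply (p : ℕ × ℕ) : basisMonomial p = monomial p := by
  simp [basisMonomial]

theorem repr_eq_zero_of_commute {q : ℕ × ℕ} {z : SkewPoly} (h : Commute (monomial q) z)
    {p : ℕ × ℕ} (hp : Odd (p.1 * q.2 + q.1 * p.2)) : basisMonomial.repr z p = 0 := by
  have hleft := basisMonomial.repr_apply_eq_mul_of_apply_eq_smul basisMonomial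
    (LinearMap.mulLeft ℂ (monomial q)) (add_left_injective q) (fun p => (-1 : ℂ) ^ (p.1 * q.2))
    (fun p => by simp [monomial_mul_monomial, add_comm q]) z p
  have hright := basisMonomial.repr_apply_eq_mul_of_apply_eq_smul basisMonomial
    (LinearMap.mulRight ℂ (monomial q)) (add_left_injective q) (fun p => (-1 : ℂ) ^ (q.1 * p.2))
    (fun p => by simp [monomial_mul_monomial]) z p
  simp only [LinearMap.mulLeft_apply, LinearMap.mulRight_apply, h.eq] at hleft hright
  have hsign : (-1 : ℂ) ^ (p.1 * q.2) ≠ (-1) ^ (q.1 * p.2) := by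
    rcases Nat.even_or_odd (p.1 * q.2) with he | ho
    · rw [he.neg_one_pow, ((Nat.odd_add'.mp hp).mpr he).neg_one_pow]; norm_num
    · rw [ho.neg_one_pow, ((Nat.odd_add.mp hp).mp ho).neg_one_pow]; norm_num
  exact (mul_eq_mul_right_iff.mp (hleft.symm.trans hright)).resolve_left hsign

theorem commute_y_x_sq : Commute y (x ^ 2) := by
  rw [Commute, SemiconjBy, y_mul_x_pow]
  norm_num

theorem commute_x_y_sq : Commute x (y ^ 2) := by
  have := y_pow_mul_x_pow 1 2
  norm_num at this
  exact this.symm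

theorem monomial_mem_adjoin_sq {p : ℕ × ℕ} (h₁ : Even p.1) (h₂ : Even p.2) :
    monomial p ∈ Algebra.adjoin ℂ {x ^ 2, y ^ 2} := by
  obtain ⟨i, hi⟩ := h₁.two_dvd
  obtain ⟨j, hj⟩ := h₂.two_dvd
  rw [monomial, hi, hj, pow_mul, pow_mul]
  exact Subalgebra.mul_mem _ (Subalgebra.pow_mem _ (Algebra.subset_adjoin (by simp)) _)
    (Subalgebra.pow_mem _ (Algebra.subset_adjoin (by simp)) _)

theorem mem_adjoin_sq_of_commute {z : SkewPoly} (hx : Commute x z) (hy : Commute y z) :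
    z ∈ Algebra.adjoin ℂ {x ^ 2, y ^ 2} := by
  rw [← monomial_one_zero] at hx
  rw [← monomial_zero_one] at hy
  rw [← basisMonomial.linearCombination_repr z, Finsupp.linearCombination_apply]
  refine Subalgebra.sum_mem _ fun p hp => Subalgebra.smul_mem _ ?_ _
  rw [basisMonomial_apply]
  have hp' := Finsupp.mem_support_iff.mp hp
  refine monomial_mem_adjoin_sq ?_ ?_
  · exact Nat.not_odd_iff_even.mp fun h => hp' (repr_eq_zero_of_commute hy (by simpa using h))
  · exact Nat.not_odd_iff_even.mp fun h => hp' (repr_eq_zero_of_commute hx (by simpa using h))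

end SkewPoly

open SkewPoly in
/-- The center of ℂ₋₁[x,y] is the subalgebra generated by x² and y². -/
theorem skew_poly_center :
    Subalgebra.center ℂ SkewPoly =
      Algebra.adjoin ℂ
        {(RingQuot.mkAlgHom ℂ SkewRel (FreeAlgebra.ι ℂ (0 : Fin 2))) ^ 2,
         (RingQuot.mkAlgHom ℂ SkewRel (FreeAlgebra.ι ℂ (1 : Fin 2))) ^ 2} := by
  change _ = Algebra.adjoin ℂ {x ^ 2, y ^ 2}
  rw [← Subalgebra.centralizer_eq_center_of_adjoin_eq_top adjoin_x_y]
  refine le_antisymm (fun z hz => ?_) (Algebra.adjoin_le ?_)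
  · rw [Subalgebra.mem_centralizer_iff] at hz
    exact mem_adjoin_sq_of_commute (hz x (by simp)) (hz y (by simp))
  · rw [Set.pair_subset_iff, SetLike.mem_coe, SetLike.mem_coe, Subalgebra.mem_centralizer_iff,
      Subalgebra.mem_centralizer_iff]
    simp only [Set.mem_insert_iff, Set.mem_singleton_iff, forall_eq_or_imp, forall_eq]
    exact ⟨⟨(Commute.self_pow x 2).eq, commute_y_x_sq.eq⟩,
      ⟨commute_x_y_sq.eq, (Commute.self_pow y 2).eq⟩⟩
end

section
/- Let c ∈ ℂ with c ≠ 0, c³ ≠ 1, and c³ ≠ −8, and let S = S(1,1,c) be the 3-dimensional Sklyanin algebra, with x̄, ȳ, z̄ the images of the generators in S. Then the four elements u₁ = x̄², u₂ = ȳ², u₃ = z̄², and g = c·ȳ³ + ȳ·x̄·z̄ − x̄·ȳ·z̄ − c·x̄³ all lie in the center of S. -/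
/-- The image of the generator x in S(1,1,c). -/
noncomputable def skX (c : ℂ) : Sklyanin c :=
  RingQuot.mkAlgHom ℂ (SklyaninRel c) (FreeAlgebra.ι ℂ (0 : Fin 3))

/-- The image of the generator y in S(1,1,c). -/
noncomputable def skY (c : ℂ) : Sklyanin c :=
  RingQuot.mkAlgHom ℂ (SklyaninRel c) (FreeAlgebra.ι ℂ (1 : Fin 3))

/-- The image of the generator z in S(1,1,c). -/
noncomputable def skZ (c : ℂ) : Sklyanin c :=
  RingQuot.mkAlgHom ℂ (SklyaninRel c) (FreeAlgebra.ι ℂ (2 : Fin 3))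


section SkAux

variable {A : Type*} [Ring A] [Algebra ℂ A]

private lemma sk_cycle_zero {c : ℂ} (hc : c ^ 3 ≠ 1) {a b d : A}
    (h1 : a = c • b) (h2 : b = c • d) (h3 : d = c • a) : a = 0 := by
  have key : a = c ^ 3 • a := by
    conv_lhs => rw [h1, h2, h3]
    rw [smul_smul, smul_smul]
    module
  have h4 : (1 - c ^ 3) • a = 0 := by
    rw [sub_smul, one_smul, ← key, sub_self]
  have hne : (1 - c ^ 3) ≠ 0 := sub_ne_zero.mpr (Ne.symm hc)
  have h5 := congrArg (fun t => (1 - c ^ 3)⁻¹ • t) h4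
  simpa [smul_smul, inv_mul_cancel₀ hne] using h5

/-- Generic normalization tactic for identities in a `ℂ`-algebra. -/
private lemma sk_cert_sq1 (c : ℂ) (X Y Z : A) :
    (X*X*Y - Y*(X*X)) - c • (Z*Z*X - X*(Z*Z))
      = X * (X*Y + Y*X + c • (Z*Z)) - (X*Y + Y*X + c • (Z*Z)) * X := by
  simp only [sub_eq_add_neg, neg_add, mul_add, add_mul, neg_mul, mul_neg, neg_neg,
    smul_mul_assoc, mul_smul_comm, smul_smul, neg_smul, smul_neg, mul_assoc]
  module

private lemma sk_cert_gX (c : ℂ) (X Y Z : A) :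
    (c • Y^3 + Y*X*Z - X*Y*Z - c • X^3) * X
        - X * (c • Y^3 + Y*X*Z - X*Y*Z - c • X^3)
      = -((X*Y) * (Z*X + X*Z + c • (Y*Y))) + Y * ((Z*X + X*Z + c • (Y*Y)) * X)
        + (X*X*Y - Y*(X*X)) * Z + Y * (X*X*Z - Z*(X*X)) := by
  simp only [pow_succ, pow_zero, one_mul, sub_eq_add_neg, neg_add, mul_add, add_mul,
    neg_mul, mul_neg, neg_neg, smul_mul_assoc, mul_smul_comm, smul_smul, neg_smul,
    smul_neg, mul_assoc]
  module

private lemma sk_cert_gY (c : ℂ) (X Y Z : A) :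
    (c • Y^3 + Y*X*Z - X*Y*Z - c • X^3) * Y
        - Y * (c • Y^3 + Y*X*Z - X*Y*Z - c • X^3)
      = -((X*Y) * (Y*Z + Z*Y + c • (X*X)))
        + c • ((Y*Z + Z*Y + c • (X*X)) * (Z*Z))
        + Y * ((Y*Z + Z*Y + c • (X*X)) * X)
        - c • (Z * ((Y*Z + Z*Y + c • (X*X)) * Z))
        - (Y*Y) * (Z*X + X*Z + c • (Y*Y))
        + Y * ((Z*X + X*Z + c • (Y*Y)) * Y)
        - c • ((X*X) * (X*Y + Y*X + c • (Z*Z)))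
        + c • ((X*Y + Y*X + c • (Z*Z)) * (X*X))
        - (Y*Z) * (X*Y + Y*X + c • (Z*Z))
        + (X*Y + Y*X + c • (Z*Z)) * (Y*Z)
        + c • ((X*X*Y - Y*(X*X)) * X)
        + (c^2) • (Z * (X*X*Z - Z*(X*X))) := by
  simp only [pow_succ, pow_zero, one_mul, sub_eq_add_neg, neg_add, mul_add, add_mul,
    neg_mul, mul_neg, neg_neg, smul_mul_assoc, mul_smul_comm, smul_smul, neg_smul,
    smul_neg, mul_assoc]
  module

private lemma sk_cert_gZ (c : ℂ) (X Y Z : A) :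
    (c • Y^3 + Y*X*Z - X*Y*Z - c • X^3) * Z
        - Z * (c • Y^3 + Y*X*Z - X*Y*Z - c • X^3)
      = -((Y*Z + Z*Y + c • (X*X)) * (X*Z))
        - c • ((Y*Y) * (Y*Z + Z*Y + c • (X*X)))
        - c • ((Y*Z + Z*Y + c • (X*X)) * (Y*Y))
        - X * ((Y*Z + Z*Y + c • (X*X)) * Z)
        + c • (Y * ((Y*Z + Z*Y + c • (X*X)) * Y))
        + c • ((Z*X + X*Z + c • (Y*Y)) * (X*X))
        + (Z*X + X*Z + c • (Y*Y)) * (Y*Z)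
        + Y * ((Z*X + X*Z + c • (Y*Y)) * Z)
        + (c^2) • ((X*X*Y - Y*(X*X)) * Y)
        + c • (X * (X*X*Z - Z*(X*X))) := by
  simp only [pow_succ, pow_zero, one_mul, sub_eq_add_neg, neg_add, mul_add, add_mul,
    neg_mul, mul_neg, neg_neg, smul_mul_assoc, mul_smul_comm, smul_smul, neg_smul,
    smul_neg, mul_assoc]
  module

end SkAux

/-- An element commuting with the images of the three generators is central. -/
private lemma sk_mem_center (c : ℂ) (u : Sklyanin c)
    (hx : skX c * u = u * skX c) (hy : skY c * u = u * skY c)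
    (hz : skZ c * u = u * skZ c) :
    u ∈ Subalgebra.center ℂ (Sklyanin c) := by
  rw [Subalgebra.mem_center_iff]
  intro b
  obtain ⟨f, rfl⟩ := RingQuot.mkAlgHom_surjective ℂ (SklyaninRel c) b
  induction f using FreeAlgebra.induction with
  | grade0 r =>
    show (RingQuot.mkAlgHom ℂ (SklyaninRel c)) (algebraMap ℂ _ r) * u
        = u * (RingQuot.mkAlgHom ℂ (SklyaninRel c)) (algebraMap ℂ _ r)
    rw [AlgHom.commutes]
    exact Algebra.commutes r u
  | grade1 i =>
    have hi : i = 0 ∨ i = 1 ∨ i = 2 := by omega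
    rcases hi with rfl | rfl | rfl
    · show (RingQuot.mkAlgHom ℂ (SklyaninRel c)) (FreeAlgebra.ι ℂ (0 : Fin 3)) * u
          = u * (RingQuot.mkAlgHom ℂ (SklyaninRel c)) (FreeAlgebra.ι ℂ (0 : Fin 3))
      exact hx
    · show (RingQuot.mkAlgHom ℂ (SklyaninRel c)) (FreeAlgebra.ι ℂ (1 : Fin 3)) * u
          = u * (RingQuot.mkAlgHom ℂ (SklyaninRel c)) (FreeAlgebra.ι ℂ (1 : Fin 3))
      exact hy
    · show (RingQuot.mkAlgHom ℂ (SklyaninRel c)) (FreeAlgebra.ι ℂ (2 : Fin 3)) * u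
          = u * (RingQuot.mkAlgHom ℂ (SklyaninRel c)) (FreeAlgebra.ι ℂ (2 : Fin 3))
      exact hz
  | mul a b ha hb => rw [map_mul, mul_assoc, hb, ← mul_assoc, ha, mul_assoc]
  | add a b ha hb => rw [map_add, add_mul, mul_add, ha, hb]

/-- The elements u₁ = x², u₂ = y², u₃ = z², and g = cy³ + yxz − xyz − cx³
are central in S(1,1,c). -/
theorem sklyanin_central_elements
    (c : ℂ) (hc0 : c ≠ 0) (hc1 : c ^ 3 ≠ 1) (hc8 : c ^ 3 ≠ -8) :
    (skX c) ^ 2 ∈ Subalgebra.center ℂ (Sklyanin c) ∧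
    (skY c) ^ 2 ∈ Subalgebra.center ℂ (Sklyanin c) ∧
    (skZ c) ^ 2 ∈ Subalgebra.center ℂ (Sklyanin c) ∧
    c • (skY c) ^ 3 + skY c * skX c * skZ c - skX c * skY c * skZ c -
        c • (skX c) ^ 3 ∈ Subalgebra.center ℂ (Sklyanin c) := by
  have h1 : skY c * skZ c + skZ c * skY c + c • (skX c * skX c) = 0 := by
    have h := RingQuot.mkAlgHom_rel ℂ (SklyaninRel.r1 (c := c))
    simp only [map_add, map_mul, map_smul, map_zero] at h
    exact h
  have h2 : skZ c * skX c + skX c * skZ c + c • (skY c * skY c) = 0 := by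
    have h := RingQuot.mkAlgHom_rel ℂ (SklyaninRel.r2 (c := c))
    simp only [map_add, map_mul, map_smul, map_zero] at h
    exact h
  have h3 : skX c * skY c + skY c * skX c + c • (skZ c * skZ c) = 0 := by
    have h := RingQuot.mkAlgHom_rel ℂ (SklyaninRel.r3 (c := c))
    simp only [map_add, map_mul, map_smul, map_zero] at h
    exact h
  set X := skX c with hX
  set Y := skY c with hY
  set Z := skZ c with hZ
  -- the six degree-3 commutator relations
  have eA : X*X*Y - Y*(X*X) = c • (Z*Z*X - X*(Z*Z)) := by
    have h := sk_cert_sq1 c X Y Z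
    rw [h3, mul_zero, zero_mul, sub_zero] at h
    exact sub_eq_zero.mp h
  have eB : Z*Z*X - X*(Z*Z) = c • (Y*Y*Z - Z*(Y*Y)) := by
    have h := sk_cert_sq1 c Z X Y
    rw [h2, mul_zero, zero_mul, sub_zero] at h
    exact sub_eq_zero.mp h
  have eC : Y*Y*Z - Z*(Y*Y) = c • (X*X*Y - Y*(X*X)) := by
    have h := sk_cert_sq1 c Y Z X
    rw [h1, mul_zero, zero_mul, sub_zero] at h
    exact sub_eq_zero.mp h
  have eA2 : X*X*Z - Z*(X*X) = c • (Y*Y*X - X*(Y*Y)) := by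
    have h : (X*X*Z - Z*(X*X)) - c • (Y*Y*X - X*(Y*Y))
        = X * (Z*X + X*Z + c • (Y*Y)) - (Z*X + X*Z + c • (Y*Y)) * X := by
      simpa [add_comm, mul_comm] using sk_cert_sq1 c X Z Y
    rw [h2, mul_zero, zero_mul, sub_zero] at h
    exact sub_eq_zero.mp h
  have eB2 : Y*Y*X - X*(Y*Y) = c • (Z*Z*Y - Y*(Z*Z)) := by
    have h : (Y*Y*X - X*(Y*Y)) - c • (Z*Z*Y - Y*(Z*Z))
        = Y * (X*Y + Y*X + c • (Z*Z)) - (X*Y + Y*X + c • (Z*Z)) * Y := by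
      simpa [add_comm, mul_comm] using sk_cert_sq1 c Y X Z
    rw [h3, mul_zero, zero_mul, sub_zero] at h
    exact sub_eq_zero.mp h
  have eC2 : Z*Z*Y - Y*(Z*Z) = c • (X*X*Z - Z*(X*X)) := by
    have h : (Z*Z*Y - Y*(Z*Z)) - c • (X*X*Z - Z*(X*X))
        = Z * (Y*Z + Z*Y + c • (X*X)) - (Y*Z + Z*Y + c • (X*X)) * Z := by
      simpa [add_comm, mul_comm] using sk_cert_sq1 c Z Y X
    rw [h1, mul_zero, zero_mul, sub_zero] at h
    exact sub_eq_zero.mp h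
  have hA : X*X*Y - Y*(X*X) = 0 := sk_cycle_zero hc1 eA eB eC
  have hB : Z*Z*X - X*(Z*Z) = 0 := sk_cycle_zero hc1 eB eC eA
  have hC : Y*Y*Z - Z*(Y*Y) = 0 := sk_cycle_zero hc1 eC eA eB
  have hA2 : X*X*Z - Z*(X*X) = 0 := sk_cycle_zero hc1 eA2 eB2 eC2
  have hB2 : Y*Y*X - X*(Y*Y) = 0 := sk_cycle_zero hc1 eB2 eC2 eA2
  have hC2 : Z*Z*Y - Y*(Z*Z) = 0 := sk_cycle_zero hc1 eC2 eA2 eB2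
  -- commutation of g with the generators, via explicit ideal-membership certificates
  have hgX : (c • Y^3 + Y*X*Z - X*Y*Z - c • X^3) * X
      = X * (c • Y^3 + Y*X*Z - X*Y*Z - c • X^3) := by
    have h := sk_cert_gX c X Y Z
    rw [h2, hA, hA2] at h
    simp only [mul_zero, zero_mul, neg_zero, add_zero, zero_add, smul_zero] at h
    exact sub_eq_zero.mp h
  have hgY : (c • Y^3 + Y*X*Z - X*Y*Z - c • X^3) * Y
      = Y * (c • Y^3 + Y*X*Z - X*Y*Z - c • X^3) := by
    have h := sk_cert_gY c X Y Z
    rw [h1, h2, h3, hA, hA2] at h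
    simp only [mul_zero, zero_mul, neg_zero, add_zero, zero_add, smul_zero,
      sub_zero, zero_sub, neg_neg, neg_zero] at h
    exact sub_eq_zero.mp h
  have hgZ : (c • Y^3 + Y*X*Z - X*Y*Z - c • X^3) * Z
      = Z * (c • Y^3 + Y*X*Z - X*Y*Z - c • X^3) := by
    have h := sk_cert_gZ c X Y Z
    rw [h1, h2, hA, hA2] at h
    simp only [mul_zero, zero_mul, neg_zero, add_zero, zero_add, smul_zero,
      sub_zero, zero_sub, neg_neg, neg_zero] at h
    exact sub_eq_zero.mp h
  refine ⟨?_, ?_, ?_, ?_⟩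
  · refine sk_mem_center c _ ?_ ?_ ?_
    · rw [pow_two, mul_assoc, ← mul_assoc]
    · rw [pow_two]; exact (sub_eq_zero.mp hA).symm
    · rw [pow_two]; exact (sub_eq_zero.mp hA2).symm
  · refine sk_mem_center c _ ?_ ?_ ?_
    · rw [pow_two]; exact (sub_eq_zero.mp hB2).symm
    · rw [pow_two, mul_assoc, ← mul_assoc]
    · rw [pow_two]; exact (sub_eq_zero.mp hC).symm
  · refine sk_mem_center c _ ?_ ?_ ?_
    · rw [pow_two]; exact (sub_eq_zero.mp hB).symm
    · rw [pow_two]; exact (sub_eq_zero.mp hC2).symm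
    · rw [pow_two, mul_assoc, ← mul_assoc]
  · exact sk_mem_center c _ hgX.symm hgY.symm hgZ.symm
end

section
/- Let c ∈ ℂ with c ≠ 0, c³ ≠ 1, and c³ ≠ −8, and let S = S(1,1,c) be the 3-dimensional Sklyanin algebra, with x̄, ȳ, z̄ the images of the generators in S. Set u₁ = x̄², u₂ = ȳ², u₃ = z̄², and g = c·ȳ³ + ȳ·x̄·z̄ − x̄·ȳ·z̄ − c·x̄³. Then the following identity holds in S: g² − c²·(u₁³ + u₂³ + u₃³) − (c³ − 4)·u₁·u₂·u₃ = 0. -/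
set_option maxHeartbeats 4000000
set_option maxRecDepth 10000


/-- The central element g = cy³ + yxz − xyz − cx³ of S(1,1,c). -/
noncomputable def skG (c : ℂ) : Sklyanin c :=
  c • (skY c) ^ 3 + skY c * skX c * skZ c - skX c * skY c * skZ c - c • (skX c) ^ 3

theorem key {A : Type*} [Ring A] [Algebra ℂ A] (c : ℂ) (X Y Z : A) :
    (c^4 - c) • ((c • Y^3 + Y*X*Z - X*Y*Z - c • X^3)^2
      - (c^2) • ((X^2)^3 + (Y^2)^3 + (Z^2)^3)
      - (c^3 - 4) • (X^2 * Y^2 * Z^2)) =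
      ((1)*c^4) • ((Y*Z + Z*Y + c • (X*X)) * Y * X * X * Z) +
      ((-2)*c^2 + (1)*c^5) • ((Y*Z + Z*Y + c • (X*X)) * Y * X * Y * Y) +
      ((-2)*c^2) • ((Y*Z + Z*Y + c • (X*X)) * Y * Y * X * Y) +
      ((1)*c^3) • ((Y*Z + Z*Y + c • (X*X)) * Z * Y * Y * Z) +
      ((-1)*c^4) • (X * (Y*Z + Z*Y + c • (X*X)) * Y * X * Z) +
      ((-1)*c^5) • (X * (Y*Z + Z*Y + c • (X*X)) * Y * Y * Y) +
      ((2)*c + (-1)*c^4) • (X * (Y*Z + Z*Y + c • (X*X)) * Z * X * Y) +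
      ((2)*c) • (X * (Y*Z + Z*Y + c • (X*X)) * Z * Y * X) +
      ((1)*c^4) • (X * X * (Y*Z + Z*Y + c • (X*X)) * Y * Z) +
      ((-2)*c) • (X * X * Y * (Y*Z + Z*Y + c • (X*X)) * Z) +
      ((2)*c + (-1)*c^4) • (X * X * Y * Z * (Y*Z + Z*Y + c • (X*X))) +
      ((1)*c) • (X * Y * (Y*Z + Z*Y + c • (X*X)) * X * Z) +
      ((1)*c^2) • (X * Y * (Y*Z + Z*Y + c • (X*X)) * Y * Y) +
      ((1)*c) • (X * Y * X * (Y*Z + Z*Y + c • (X*X)) * Z) +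
      ((-1)*c^4) • (X * Y * X * Z * (Y*Z + Z*Y + c • (X*X))) +
      ((-1)*c^2 + (1)*c^5) • (X * Y * Y * (Y*Z + Z*Y + c • (X*X)) * Y) +
      ((1)*c^2 + (-1)*c^5) • (X * Y * Y * Y * (Y*Z + Z*Y + c • (X*X))) +
      ((-2)*c + (1)*c^4) • (X * Z * (Y*Z + Z*Y + c • (X*X)) * X * Y) +
      ((-2)*c) • (X * Z * (Y*Z + Z*Y + c • (X*X)) * Y * X) +
      ((-1)*c^4) • (Y * (Y*Z + Z*Y + c • (X*X)) * X * X * Z) +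
      ((2)*c^2 + (-1)*c^5) • (Y * (Y*Z + Z*Y + c • (X*X)) * X * Y * Y) +
      ((2)*c^2) • (Y * (Y*Z + Z*Y + c • (X*X)) * Y * X * Y) +
      ((-1)*c^4) • (Y * (Y*Z + Z*Y + c • (X*X)) * Z * X * X) +
      ((-1)*c^3) • (Y * (Y*Z + Z*Y + c • (X*X)) * Z * Y * Z) +
      ((-1)*c + (1)*c^4) • (Y * X * (Y*Z + Z*Y + c • (X*X)) * X * Z) +
      ((-1)*c^2) • (Y * X * (Y*Z + Z*Y + c • (X*X)) * Y * Y) +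
      ((-1)*c^4) • (Y * X * (Y*Z + Z*Y + c • (X*X)) * Z * X) +
      ((1)*c + (-1)*c^4) • (Y * X * X * (Y*Z + Z*Y + c • (X*X)) * Z) +
      ((-2)*c + (2)*c^4) • (Y * X * X * Z * (Y*Z + Z*Y + c • (X*X))) +
      ((1)*c^2) • (Y * X * Y * (Y*Z + Z*Y + c • (X*X)) * Y) +
      ((-1)*c^2 + (1)*c^5) • (Y * X * Y * Y * (Y*Z + Z*Y + c • (X*X))) +
      ((1)*c^4) • (Y * X * Z * (Y*Z + Z*Y + c • (X*X)) * X) +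
      ((1)*c^3) • (Y * Y * (Y*Z + Z*Y + c • (X*X)) * Z * Z) +
      ((-1)*c^3) • (Y * Y * Z * (Y*Z + Z*Y + c • (X*X)) * Z) +
      ((1)*c^4) • (Y * Z * (Y*Z + Z*Y + c • (X*X)) * X * X) +
      ((1)*c^3) • (Y * Z * (Y*Z + Z*Y + c • (X*X)) * Y * Z) +
      ((-1)*c^3) • (Z * (Y*Z + Z*Y + c • (X*X)) * Y * Y * Z) +
      ((1)*c^4) • ((Z*X + X*Z + c • (Y*Y)) * X * Y * Y * Z) +
      ((1)*c^3) • ((Z*X + X*Z + c • (Y*Y)) * Z * X * X * Z) +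
      ((-2)*c + (1)*c^4) • ((Z*X + X*Z + c • (Y*Y)) * Z * X * Y * Y) +
      ((-2)*c) • ((Z*X + X*Z + c • (Y*Y)) * Z * Y * X * Y) +
      ((2)*c^2 + (-1)*c^5) • (X * (Z*X + X*Z + c • (Y*Y)) * X * X * Y) +
      ((2)*c^2) • (X * (Z*X + X*Z + c • (Y*Y)) * X * Y * X) +
      ((-1)*c^4) • (X * (Z*X + X*Z + c • (Y*Y)) * Y * Y * Z) +
      ((-1)*c^3) • (X * (Z*X + X*Z + c • (Y*Y)) * Z * X * Z) +
      ((-1)*c^4) • (X * (Z*X + X*Z + c • (Y*Y)) * Z * Y * Y) +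
      ((-2)*c^2 + (1)*c^5) • (X * X * (Z*X + X*Z + c • (Y*Y)) * X * Y) +
      ((-2)*c^2) • (X * X * (Z*X + X*Z + c • (Y*Y)) * Y * X) +
      ((1)*c^3) • (X * X * (Z*X + X*Z + c • (Y*Y)) * Z * Z) +
      ((-2)*c^2 + (1)*c^5) • (X * X * Y * (Z*X + X*Z + c • (Y*Y)) * X) +
      ((2)*c^2 + (-1)*c^5) • (X * X * Y * X * (Z*X + X*Z + c • (Y*Y))) +
      ((-1)*c^3) • (X * X * Z * (Z*X + X*Z + c • (Y*Y)) * Z) +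
      ((-1)*c^2 + (1)*c^5) • (X * Y * (Z*X + X*Z + c • (Y*Y)) * X * X) +
      ((-1)*c + (1)*c^4) • (X * Y * (Z*X + X*Z + c • (Y*Y)) * Y * Z) +
      ((1)*c^2) • (X * Y * X * (Z*X + X*Z + c • (Y*Y)) * X) +
      ((-1)*c^2) • (X * Y * X * X * (Z*X + X*Z + c • (Y*Y))) +
      ((-1)*c + (1)*c^4) • (X * Y * Y * (Z*X + X*Z + c • (Y*Y)) * Z) +
      ((1)*c^3) • (X * Z * (Z*X + X*Z + c • (Y*Y)) * X * Z) +
      ((1)*c^4) • (X * Z * (Z*X + X*Z + c • (Y*Y)) * Y * Y) +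
      ((-1)*c^5) • (Y * (Z*X + X*Z + c • (Y*Y)) * X * X * X) +
      ((-1)*c^4) • (Y * (Z*X + X*Z + c • (Y*Y)) * X * Y * Z) +
      ((1)*c^2 + (-1)*c^5) • (Y * X * (Z*X + X*Z + c • (Y*Y)) * X * X) +
      ((1)*c) • (Y * X * (Z*X + X*Z + c • (Y*Y)) * Y * Z) +
      ((-1)*c^4) • (Y * X * (Z*X + X*Z + c • (Y*Y)) * Z * Y) +
      ((1)*c^2) • (Y * X * X * (Z*X + X*Z + c • (Y*Y)) * X) +
      ((-1)*c^2 + (1)*c^5) • (Y * X * X * X * (Z*X + X*Z + c • (Y*Y))) +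
      ((1)*c + (-1)*c^4) • (Y * X * Y * (Z*X + X*Z + c • (Y*Y)) * Z) +
      ((1)*c^4) • (Y * X * Z * (Z*X + X*Z + c • (Y*Y)) * Y) +
      ((1)*c^4) • (Y * Y * (Z*X + X*Z + c • (Y*Y)) * X * Z) +
      ((-1)*c^4) • (Y * Y * X * (Z*X + X*Z + c • (Y*Y)) * Z) +
      ((-1)*c^3) • (Z * (Z*X + X*Z + c • (Y*Y)) * X * X * Z) +
      ((2)*c + (-1)*c^4) • (Z * (Z*X + X*Z + c • (Y*Y)) * X * Y * Y) +
      ((2)*c) • (Z * (Z*X + X*Z + c • (Y*Y)) * Y * X * Y) +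
      ((1)*c^2) • ((X*Y + Y*X + c • (Z*Z)) * X * X * X * Z) +
      ((-2) + (1)*c^3) • ((X*Y + Y*X + c • (Z*Z)) * X * X * Y * Y) +
      ((-2)) • ((X*Y + Y*X + c • (Z*Z)) * X * Y * X * Y) +
      ((1)*c^2) • ((X*Y + Y*X + c • (Z*Z)) * Y * Y * Y * Z) +
      ((1)*c^2 + (-1)*c^5) • ((X*Y + Y*X + c • (Z*Z)) * Z * Z * Z * Z) +
      ((-2)*c^2) • (X * (X*Y + Y*X + c • (Z*Z)) * X * X * Z) +
      ((2) + (-2)*c^3) • (X * (X*Y + Y*X + c • (Z*Z)) * X * Y * Y) +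
      ((4) + (-1)*c^3) • (X * (X*Y + Y*X + c • (Z*Z)) * Y * X * Y) +
      ((2)) • (X * (X*Y + Y*X + c • (Z*Z)) * Y * Y * X) +
      ((2)*c^2) • (X * X * (X*Y + Y*X + c • (Z*Z)) * X * Z) +
      ((1)*c^3) • (X * X * (X*Y + Y*X + c • (Z*Z)) * Y * Y) +
      ((-1)*c^2) • (X * X * X * (X*Y + Y*X + c • (Z*Z)) * Z) +
      ((-2) + (1)*c^3) • (X * X * Y * (X*Y + Y*X + c • (Z*Z)) * Y) +
      ((-2) + (4)*c^3 + (-1)*c^6) • (X * X * Y * Y * (X*Y + Y*X + c • (Z*Z))) +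
      ((-2) + (1)*c^3) • (X * Y * (X*Y + Y*X + c • (Z*Z)) * X * Y) +
      ((-2)) • (X * Y * (X*Y + Y*X + c • (Z*Z)) * Y * X) +
      ((-1)*c + (1)*c^4) • (X * Y * (X*Y + Y*X + c • (Z*Z)) * Z * Z) +
      ((1)*c^3) • (X * Y * X * (X*Y + Y*X + c • (Z*Z)) * Y) +
      ((-1)*c^3) • (X * Y * X * Y * (X*Y + Y*X + c • (Z*Z))) +
      ((2) + (-2)*c^3) • (X * Y * Y * X * (X*Y + Y*X + c • (Z*Z))) +
      ((-1)*c^3) • (Y * (X*Y + Y*X + c • (Z*Z)) * Y * X * X) +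
      ((-2)*c^2) • (Y * (X*Y + Y*X + c • (Z*Z)) * Y * Y * Z) +
      ((-1)*c^3) • (Y * X * (X*Y + Y*X + c • (Z*Z)) * X * Y) +
      ((-1)*c^3) • (Y * X * (X*Y + Y*X + c • (Z*Z)) * Y * X) +
      ((-1)*c + (1)*c^4) • (Y * X * (X*Y + Y*X + c • (Z*Z)) * Z * Z) +
      ((2) + (-1)*c^3) • (Y * X * X * (X*Y + Y*X + c • (Z*Z)) * Y) +
      ((1)*c^3) • (Y * X * Y * (X*Y + Y*X + c • (Z*Z)) * X) +
      ((1)*c^3) • (Y * Y * (X*Y + Y*X + c • (Z*Z)) * X * X) +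
      ((2)*c^2) • (Y * Y * (X*Y + Y*X + c • (Z*Z)) * Y * Z) +
      ((-1)*c^2) • (Y * Y * Y * (X*Y + Y*X + c • (Z*Z)) * Z) := by
  simp only [pow_succ, pow_zero, one_mul, sub_eq_add_neg, add_mul, mul_add, neg_mul, mul_neg,
    smul_mul_assoc, mul_smul_comm, mul_assoc, smul_add, smul_neg, smul_smul, neg_add_rev, neg_neg]
  module


lemma skRel1 (c : ℂ) :
    skY c * skZ c + skZ c * skY c + c • (skX c * skX c) = 0 := by
  have h := RingQuot.mkAlgHom_rel ℂ (SklyaninRel.r1 (c := c))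
  simpa [skX, skY, skZ, map_add, map_mul, map_smul] using h

lemma skRel2 (c : ℂ) :
    skZ c * skX c + skX c * skZ c + c • (skY c * skY c) = 0 := by
  have h := RingQuot.mkAlgHom_rel ℂ (SklyaninRel.r2 (c := c))
  simpa [skX, skY, skZ, map_add, map_mul, map_smul] using h

lemma skRel3 (c : ℂ) :
    skX c * skY c + skY c * skX c + c • (skZ c * skZ c) = 0 := by
  have h := RingQuot.mkAlgHom_rel ℂ (SklyaninRel.r3 (c := c))
  simpa [skX, skY, skZ, map_add, map_mul, map_smul] using h

/-- The degree-6 relation of the center of S(1,1,c):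
g² − c²(u₁³ + u₂³ + u₃³) − (c³ − 4)u₁u₂u₃ = 0. -/
theorem sklyanin_center_relation
    (c : ℂ) (hc0 : c ≠ 0) (hc1 : c ^ 3 ≠ 1) (hc8 : c ^ 3 ≠ -8) :
    (skG c) ^ 2 -
      (c ^ 2) • (((skX c) ^ 2) ^ 3 + ((skY c) ^ 2) ^ 3 + ((skZ c) ^ 2) ^ 3) -
      (c ^ 3 - 4) • ((skX c) ^ 2 * (skY c) ^ 2 * (skZ c) ^ 2) = 0 := by
  have hk := key c (skX c) (skY c) (skZ c)
  rw [skRel1 c, skRel2 c, skRel3 c] at hk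
  simp only [zero_mul, mul_zero, smul_zero, add_zero, zero_add] at hk
  have hne : c ^ 4 - c ≠ 0 := by
    have : c ^ 4 - c = c * (c ^ 3 - 1) := by ring
    rw [this]
    exact mul_ne_zero hc0 (sub_ne_zero.mpr hc1)
  have h2 := congrArg (fun t => (c ^ 4 - c)⁻¹ • t) hk
  simp only [smul_smul, inv_mul_cancel₀ hne, one_smul, smul_zero] at h2
  simpa [skG] using h2
end

section
/- Let c ∈ ℂ with c ≠ 0, c³ ≠ 1, and c³ ≠ −8, and let g, u₁, u₂, u₃ ∈ ℂ. If 2·g = 0, 3·c²·u₁² + (c³ − 4)·u₂·u₃ = 0, 3·c²·u₂² + (c³ − 4)·u₁·u₃ = 0, and 3·c²·u₃² + (c³ − 4)·u₁·u₂ = 0, then g = 0 and u₁ = u₂ = u₃ = 0. (Equivalently, the only common zero of the partial derivatives of F = g² − c²(u₁³ + u₂³ + u₃³) − (c³ − 4)u₁u₂u₃ is the origin, so the affine variety X_c = V(F) ⊂ ℂ⁴ is smooth away from the origin.) -/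
private lemma sq_zero_of (c u : ℂ) (hc0 : c ≠ 0) (h : 3 * c ^ 2 * u ^ 2 = 0) : u = 0 := by
  have h3c : (3 : ℂ) * c ^ 2 ≠ 0 := by
    simp [pow_eq_zero_iff, hc0]
  have : u ^ 2 = 0 := by
    rcases mul_eq_zero.mp h with h' | h'
    · exact absurd h' h3c
    · exact h'
  exact pow_eq_zero_iff (by norm_num) |>.mp this

/-- The only common zero of the partial derivatives of
F = g² − c²(u₁³ + u₂³ + u₃³) − (c³ − 4)u₁u₂u₃ is the origin, so the affine
variety X_c = V(F) ⊂ ℂ⁴ is smooth away from the origin. -/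
theorem sklyanin_center_variety_smooth_away_from_origin
    (c g u₁ u₂ u₃ : ℂ) (hc0 : c ≠ 0) (hc1 : c ^ 3 ≠ 1) (hc8 : c ^ 3 ≠ -8)
    (hg : 2 * g = 0)
    (h1 : 3 * c ^ 2 * u₁ ^ 2 + (c ^ 3 - 4) * u₂ * u₃ = 0)
    (h2 : 3 * c ^ 2 * u₂ ^ 2 + (c ^ 3 - 4) * u₁ * u₃ = 0)
    (h3 : 3 * c ^ 2 * u₃ ^ 2 + (c ^ 3 - 4) * u₁ * u₂ = 0) :
    g = 0 ∧ u₁ = 0 ∧ u₂ = 0 ∧ u₃ = 0 := by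
  have hg0 : g = 0 := by linear_combination hg / 2
  have e1 : 3 * c ^ 2 * u₁ ^ 2 = -((c ^ 3 - 4) * (u₂ * u₃)) := by linear_combination h1
  have e2 : 3 * c ^ 2 * u₂ ^ 2 = -((c ^ 3 - 4) * (u₁ * u₃)) := by linear_combination h2
  have e3 : 3 * c ^ 2 * u₃ ^ 2 = -((c ^ 3 - 4) * (u₁ * u₂)) := by linear_combination h3
  have key : (c ^ 3 - 1) * (c ^ 3 + 8) ^ 2 * (u₁ * u₂ * u₃) ^ 2 = 0 := by
    have calc1 : 27 * c ^ 6 * (u₁ * u₂ * u₃) ^ 2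
        = (3 * c ^ 2 * u₁ ^ 2) * (3 * c ^ 2 * u₂ ^ 2) * (3 * c ^ 2 * u₃ ^ 2) := by ring
    rw [e1, e2, e3] at calc1
    linear_combination calc1
  have hP : u₁ * u₂ * u₃ = 0 := by
    have hA : c ^ 3 - 1 ≠ 0 := sub_ne_zero.mpr hc1
    have hB : c ^ 3 + 8 ≠ 0 := by
      intro h; exact hc8 (by linear_combination h)
    have := mul_eq_zero.mp key
    rcases this with h | h
    · rcases mul_eq_zero.mp h with h' | h'
      · exact absurd h' hA
      · exact absurd h' (pow_ne_zero 2 hB)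
    · exact pow_eq_zero_iff (by norm_num) |>.mp h
  rcases mul_eq_zero.mp hP with h12 | h3'
  · rcases mul_eq_zero.mp h12 with h1' | h2'
    · have hu2 : u₂ = 0 := sq_zero_of c u₂ hc0 (by linear_combination h2 - (c ^ 3 - 4) * u₃ * h1')
      have hu3 : u₃ = 0 := sq_zero_of c u₃ hc0 (by linear_combination h3 - (c ^ 3 - 4) * u₂ * h1')
      exact ⟨hg0, h1', hu2, hu3⟩
    · have hu1 : u₁ = 0 := sq_zero_of c u₁ hc0 (by linear_combination h1 - (c ^ 3 - 4) * u₃ * h2')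
      have hu3 : u₃ = 0 := sq_zero_of c u₃ hc0 (by linear_combination h3 - (c ^ 3 - 4) * u₁ * h2')
      exact ⟨hg0, hu1, h2', hu3⟩
  · have hu1 : u₁ = 0 := sq_zero_of c u₁ hc0 (by linear_combination h1 - (c ^ 3 - 4) * u₂ * h3')
    have hu2 : u₂ = 0 := sq_zero_of c u₂ hc0 (by linear_combination h2 - (c ^ 3 - 4) * u₁ * h3')
    exact ⟨hg0, hu1, hu2, h3'⟩
end
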